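/- arXiv:1709.01352 — 11 statements merged into one kernel-verified Lean document; each statement's English description precedes it below -/
import Mathlib

section
/- Let q, a₁ be integers with q ≥ 2 and a₁² ≤ 4q such that the pair (q, a₁) is supersingular (i.e., β is a root of unity). Then there exists a positive integer n with −aₙ = ⌊2·q^{n/2}⌋ if and only if a₁ ∈ {0, √q, ±√(2q), ±√(3q), −2√q} (where membership requires the indicated real number to equal the integer a₁). Moreover, if such a positive integer n exists, then there exist infinitely many such n. -/
private lemma aux_inf (q : ℤ) (α : ℂ) (a : ℕ → ℤ)
    (ha : ∀ n : ℕ, (a n : ℂ) = α ^ n + (starRingEnd ℂ) α ^ n)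
    (m : ℕ) (hm : 0 < m) (c : ℤ)
    (hc : α ^ m = -(c : ℂ)) (hcr : (c : ℝ) = Real.sqrt q ^ m) :
    {n : ℕ | 0 < n ∧ -(a n) = ⌊2 * Real.sqrt q ^ n⌋}.Infinite := by
  apply Set.infinite_of_injective_forall_mem (f := fun j : ℕ => m * (2 * j + 1))
  · intro x y hxy
    simp only at hxy
    have := Nat.eq_of_mul_eq_mul_left hm hxy
    omega
  · intro j
    set n := m * (2 * j + 1) with hn
    have hodd : Odd (2 * j + 1) := ⟨j, by ring⟩
    have hαn : α ^ n = -((c ^ (2 * j + 1) : ℤ) : ℂ) := by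
      rw [hn, pow_mul, hc, hodd.neg_pow]
      push_cast
      ring
    have hcαn : (starRingEnd ℂ) α ^ n = -((c ^ (2 * j + 1) : ℤ) : ℂ) := by
      rw [← map_pow, hαn]
      simp
    have han : a n = -(2 * c ^ (2 * j + 1)) := by
      have h := ha n
      rw [hαn, hcαn] at h
      have h2 : (a n : ℂ) = ((-(2 * c ^ (2 * j + 1)) : ℤ) : ℂ) := by
        rw [h]; push_cast; ring
      exact_mod_cast h2
    refine ⟨by positivity, ?_⟩
    have hflo : (2 * Real.sqrt q ^ n : ℝ) = ((2 * c ^ (2 * j + 1) : ℤ) : ℝ) := by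
      rw [hn, pow_mul, ← hcr]
      push_cast
      ring
    rw [hflo, Int.floor_intCast, han, neg_neg]

private lemma no_sol_lin (q : ℤ) (b : ℤ) (hb : 2 ≤ b) (hqb : q = b ^ 2) (α : ℂ)
    (hαb : α = (b : ℂ)) (a : ℕ → ℤ)
    (ha : ∀ n : ℕ, (a n : ℂ) = α ^ n + (starRingEnd ℂ) α ^ n) :
    ¬ ∃ n : ℕ, 0 < n ∧ -(a n) = ⌊2 * Real.sqrt q ^ n⌋ := by
  rintro ⟨n, hn, heq⟩
  have hrn : Real.sqrt q = (b : ℝ) := by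
    rw [hqb]; push_cast; exact Real.sqrt_sq (by positivity)
  have han : a n = 2 * b ^ n := by
    have h := ha n
    rw [hαb] at h
    have : (a n : ℂ) = ((2 * b ^ n : ℤ) : ℂ) := by
      rw [h]; push_cast; simp; ring
    exact_mod_cast this
  rw [hrn] at heq
  have hfl : ⌊(2 * (b : ℝ) ^ n : ℝ)⌋ = 2 * b ^ n := by
    rw [show (2 * (b : ℝ) ^ n : ℝ) = ((2 * b ^ n : ℤ) : ℝ) by push_cast; ring]
    exact Int.floor_intCast _
  rw [hfl, han] at heq
  have hbn : 0 < b ^ n := by positivity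
  omega

private lemma no_sol_cube (q a1 : ℤ) (b : ℤ) (hb : 2 ≤ b) (hqb : q = b ^ 2) (ha1b : a1 = -b)
    (α : ℂ) (hα3 : α ^ 3 = ((b : ℤ) : ℂ) ^ 3)
    (hs : α + (starRingEnd ℂ) α = (a1 : ℂ)) (hp : α * (starRingEnd ℂ) α = (q : ℂ))
    (a : ℕ → ℤ)
    (ha : ∀ n : ℕ, (a n : ℂ) = α ^ n + (starRingEnd ℂ) α ^ n) :
    ¬ ∃ n : ℕ, 0 < n ∧ -(a n) = ⌊2 * Real.sqrt q ^ n⌋ := by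
  rintro ⟨n, hn, heq⟩
  have hrn : Real.sqrt q = (b : ℝ) := by
    rw [hqb]; push_cast; exact Real.sqrt_sq (by positivity)
  have hfl : ⌊(2 * (b : ℝ) ^ n : ℝ)⌋ = 2 * b ^ n := by
    rw [show (2 * (b : ℝ) ^ n : ℝ) = ((2 * b ^ n : ℤ) : ℝ) by push_cast; ring]
    exact Int.floor_intCast _
  rw [hrn, hfl] at heq
  have hdm : 3 * (n / 3) + n % 3 = n := Nat.div_add_mod n 3
  set k := n / 3 with hk
  set j := n % 3 with hj
  have hαn : α ^ n = ((b : ℂ)) ^ (3 * k) * α ^ j := by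
    rw [← hdm, pow_add, pow_mul, hα3, ← pow_mul]
  have hcαn : (starRingEnd ℂ) α ^ n = ((b : ℂ)) ^ (3 * k) * (starRingEnd ℂ) α ^ j := by
    have hc3 : (starRingEnd ℂ) α ^ 3 = ((b : ℂ)) ^ 3 := by
      rw [← map_pow, hα3]; simp
    rw [← hdm, pow_add, pow_mul, hc3, ← pow_mul]
  have han : (a n : ℂ) = ((b : ℂ)) ^ (3 * k) * (α ^ j + (starRingEnd ℂ) α ^ j) := by
    rw [ha n, hαn, hcαn]; ring
  have hbn : 0 < b ^ n := by positivity
  have hj3 : j < 3 := Nat.mod_lt _ (by norm_num)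
  interval_cases j
  · have h0 : (a n : ℂ) = ((2 * b ^ n : ℤ) : ℂ) := by
      rw [han]
      push_cast
      rw [show n = 3 * k by omega]
      ring
    have : a n = 2 * b ^ n := by exact_mod_cast h0
    omega
  · simp only [pow_one] at han
    have h1 : (a n : ℂ) = ((-(b ^ n) : ℤ) : ℂ) := by
      rw [han, hs, ha1b]
      push_cast
      rw [show n = 3 * k + 1 by omega]
      ring
    have : a n = -(b ^ n) := by exact_mod_cast h1
    omega
  · have hsq : α ^ 2 + (starRingEnd ℂ) α ^ 2 = ((a1 : ℂ)) ^ 2 - 2 * (q : ℂ) := by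
      linear_combination (α + (starRingEnd ℂ) α + (a1 : ℂ)) * hs - 2 * hp
    have h2 : (a n : ℂ) = ((-(b ^ n) : ℤ) : ℂ) := by
      rw [han, hsq, ha1b, hqb]
      push_cast
      rw [show n = 3 * k + 2 by omega]
      ring
    have : a n = -(b ^ n) := by exact_mod_cast h2
    omega

/-- For a supersingular pair `(q, a₁)` (i.e. `β` a root of unity), there
exists a positive `n` with `−aₙ = ⌊2·q^{n/2}⌋` iff
`a₁ ∈ {0, √q, ±√(2q), ±√(3q), −2√q}`; moreover if such `n` exists there are infinitely many. -/
theorem supersingular_maximal_iff (q a1 : ℤ) (hq : 2 ≤ q) (ha1 : a1 ^ 2 ≤ 4 * q)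
    (α β : ℂ) (hα : α ^ 2 - a1 * α + q = 0) (him : 0 ≤ α.im)
    (hβ : β = α / (Real.sqrt q : ℂ))
    (hss : ∃ k : ℕ, 0 < k ∧ β ^ k = 1)
    (a : ℕ → ℤ) (ha : ∀ n : ℕ, (a n : ℂ) = α ^ n + (starRingEnd ℂ) α ^ n) :
    ((∃ n : ℕ, 0 < n ∧ -(a n) = ⌊2 * Real.sqrt q ^ n⌋) ↔
      ((a1 : ℝ) = 0 ∨ (a1 : ℝ) = Real.sqrt q ∨ (a1 : ℝ) = Real.sqrt (2 * q) ∨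
        (a1 : ℝ) = -Real.sqrt (2 * q) ∨ (a1 : ℝ) = Real.sqrt (3 * q) ∨
        (a1 : ℝ) = -Real.sqrt (3 * q) ∨ (a1 : ℝ) = -(2 * Real.sqrt q))) ∧
    ((∃ n : ℕ, 0 < n ∧ -(a n) = ⌊2 * Real.sqrt q ^ n⌋) →
      {n : ℕ | 0 < n ∧ -(a n) = ⌊2 * Real.sqrt q ^ n⌋}.Infinite) := by
  have hq0 : (0:ℝ) < (q:ℝ) := by exact_mod_cast (by omega : (0:ℤ) < q)
  have hrnn : (0:ℝ) ≤ (q:ℝ) := le_of_lt hq0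
  have hqr : (2:ℝ) ≤ (q:ℝ) := by exact_mod_cast hq
  have hconj : (starRingEnd ℂ) α ^ 2 - (a1:ℂ) * (starRingEnd ℂ) α + (q:ℂ) = 0 := by
    have h := congrArg (starRingEnd ℂ) hα
    simpa [map_sub, map_add, map_mul, map_pow] using h
  have key : (α - (starRingEnd ℂ) α) * (α + (starRingEnd ℂ) α - (a1:ℂ)) = 0 := by
    linear_combination hα - hconj
  have hs : α + (starRingEnd ℂ) α = (a1:ℂ) := by
    rcases mul_eq_zero.mp key with h | h
    · have hre : ((α.re : ℝ) : ℂ) = α := Complex.conj_eq_iff_re.mp (by linear_combination -h)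
      have hx : (α.re:ℝ)^2 - (a1:ℝ)*α.re + (q:ℝ) = 0 := by
        have h2 := hα
        rw [← hre] at h2
        exact_mod_cast h2
      have ha1r : (a1:ℝ)^2 ≤ 4*(q:ℝ) := by exact_mod_cast ha1
      have hle : (2*α.re - (a1:ℝ))^2 ≤ 0 := by nlinarith
      have hz : (2*α.re - (a1:ℝ))^2 = 0 := le_antisymm hle (sq_nonneg _)
      have h2x : 2*α.re = (a1:ℝ) := by
        have := pow_eq_zero_iff (n := 2) (by norm_num) |>.mp hz
        linarith
      have hca : (starRingEnd ℂ) α = α := by linear_combination -h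
      rw [hca, ← hre]
      exact_mod_cast congrArg (fun x : ℝ => (x : ℂ)) (show α.re + α.re = ((a1 : ℤ) : ℝ) by linarith)
    · linear_combination h
  have hp : α * (starRingEnd ℂ) α = (q:ℂ) := by linear_combination α * hs - hα
  -- Step B : q ∣ a1^2
  obtain ⟨k, hk0, hβk⟩ := hss
  have hβint : IsIntegral ℤ β := IsIntegral.of_pow hk0 (hβk ▸ isIntegral_one)
  have hcβint : IsIntegral ℤ ((starRingEnd ℂ) β) := by
    apply IsIntegral.of_pow hk0
    rw [← map_pow, hβk, map_one]
    exact isIntegral_one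
  have hq2 : ((Real.sqrt q : ℝ) : ℂ)^2 = (q:ℂ) := by
    rw [← Complex.ofReal_pow, Real.sq_sqrt hrnn]
    norm_cast
  have hsum : β + (starRingEnd ℂ) β = (a1:ℂ) / ((Real.sqrt q : ℝ) : ℂ) := by
    rw [hβ, map_div₀, Complex.conj_ofReal, ← add_div, hs]
  have hsq2 : (β + (starRingEnd ℂ) β)^2 = ((a1^2 / (q:ℚ) : ℚ) : ℂ) := by
    rw [hsum, div_pow, hq2]
    push_cast
    ring
  have hti : IsIntegral ℤ (((a1^2 / (q:ℚ) : ℚ)) : ℂ) := by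
    rw [← hsq2]
    exact (hβint.add hcβint).pow 2
  have htq : IsIntegral ℤ ((a1:ℚ)^2 / (q:ℚ)) := by
    have h2 : IsIntegral ℤ ((algebraMap ℚ ℂ) ((a1:ℚ)^2 / (q:ℚ))) := by
      rw [eq_ratCast (algebraMap ℚ ℂ)]
      convert hti using 2
      all_goals (push_cast; ring)
    rwa [isIntegral_algebraMap_iff (algebraMap ℚ ℂ).injective] at h2
  obtain ⟨y, hy⟩ := IsIntegrallyClosed.isIntegral_iff.mp htq
  have hqQ : ((q:ℚ)) ≠ 0 := by positivity
  have hqy : a1 ^ 2 = q * y := by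
    simp only [algebraMap_int_eq, eq_intCast] at hy
    rw [eq_div_iff hqQ] at hy
    have h3 : (a1:ℚ)^2 = (q:ℚ) * (y:ℚ) := by push_cast at hy ⊢; linarith
    exact_mod_cast h3
  have hy0 : 0 ≤ y := by
    by_contra hcon
    push_neg at hcon
    nlinarith [sq_nonneg a1]
  have hy4 : y ≤ 4 := by nlinarith
  clear hy hβk hβint hcβint hsum hsq2 hti htq hq2 hβ hconj key hqQ
  interval_cases y
  · -- y = 0 : a1 = 0
    have h0 : a1 = 0 := by
      have : a1 ^ 2 = 0 := by omega
      exact pow_eq_zero_iff (n := 2) (by norm_num) |>.mp this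
    have hα2 : α ^ 2 = -((q : ℤ) : ℂ) := by
      rw [h0] at hα
      push_cast at hα ⊢
      linear_combination hα
    have hcr : ((q : ℤ) : ℝ) = Real.sqrt q ^ 2 := by rw [Real.sq_sqrt hrnn]
    have hinf := aux_inf q α a ha 2 (by norm_num) q hα2 hcr
    refine ⟨iff_of_true ?_ (Or.inl (by rw [h0]; norm_num)), fun _ => hinf⟩
    obtain ⟨n, hn1, hn2⟩ := hinf.nonempty
    exact ⟨n, hn1, hn2⟩
  · -- y = 1 : a1^2 = q
    have hq1 : a1 ^ 2 = q := by linarith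
    have hq1r : (a1:ℝ)^2 = (q:ℝ) := by exact_mod_cast hq1
    have hqc : ((a1:ℂ))^2 = (q:ℂ) := by exact_mod_cast congrArg (fun z : ℤ => (z : ℂ)) hq1
    rcases lt_trichotomy a1 0 with hneg | hzero | hpos
    · -- a1 < 0 : no solutions, RHS false
      have hb2 : 2 ≤ -a1 := by nlinarith [sq_nonneg (a1 + 1)]
      have hα3 : α ^ 3 = (((-a1 : ℤ)) : ℂ) ^ 3 := by
        push_cast
        linear_combination (α + (a1:ℂ)) * hα + (α + (a1:ℂ)) * hqc
      have hnosol := no_sol_cube q a1 (-a1) hb2 (by linarith) (by ring) α hα3 hs hp a ha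
      have hrhs : ¬ ((a1 : ℝ) = 0 ∨ (a1 : ℝ) = Real.sqrt q ∨ (a1 : ℝ) = Real.sqrt (2 * q) ∨
          (a1 : ℝ) = -Real.sqrt (2 * q) ∨ (a1 : ℝ) = Real.sqrt (3 * q) ∨
          (a1 : ℝ) = -Real.sqrt (3 * q) ∨ (a1 : ℝ) = -(2 * Real.sqrt q)) := by
        have ha1neg : (a1:ℝ) < 0 := by exact_mod_cast hneg
        rintro (h | h | h | h | h | h | h)
        · linarith
        · linarith [Real.sqrt_nonneg ((q:ℝ))]
        · linarith [Real.sqrt_nonneg (2*(q:ℝ))]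
        · rw [h, neg_sq, Real.sq_sqrt (by positivity : (0:ℝ) ≤ 2*(q:ℝ))] at hq1r
          linarith
        · linarith [Real.sqrt_nonneg (3*(q:ℝ))]
        · rw [h, neg_sq, Real.sq_sqrt (by positivity : (0:ℝ) ≤ 3*(q:ℝ))] at hq1r
          linarith
        · rw [h] at hq1r
          have hsqq := Real.sq_sqrt hrnn
          nlinarith
      exact ⟨iff_of_false hnosol hrhs, fun hex => absurd hex hnosol⟩
    · exfalso; rw [hzero] at hq1; simp at hq1; omega
    · -- a1 > 0 : solutions with m = 3
      have hα3 : α ^ 3 = -(((a1 * q : ℤ)) : ℂ) := by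
        push_cast
        linear_combination (α + (a1:ℂ)) * hα + α * hqc
      have hra : Real.sqrt q = (a1:ℝ) := by
        rw [show ((q:ℤ):ℝ) = ((a1:ℝ))^2 from hq1r.symm]
        exact Real.sqrt_sq (by exact_mod_cast hpos.le)
      have hcr : ((a1 * q : ℤ) : ℝ) = Real.sqrt q ^ 3 := by
        rw [hra]
        push_cast
        linear_combination -(a1:ℝ) * hq1r
      have hinf := aux_inf q α a ha 3 (by norm_num) (a1 * q) hα3 hcr
      refine ⟨iff_of_true ?_ (Or.inr (Or.inl hra.symm)), fun _ => hinf⟩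
      obtain ⟨n, hn1, hn2⟩ := hinf.nonempty
      exact ⟨n, hn1, hn2⟩
  · -- y = 2 : a1^2 = 2q
    have hq1 : a1 ^ 2 = 2 * q := by linarith
    have hq1r : (a1:ℝ)^2 = 2*(q:ℝ) := by exact_mod_cast hq1
    have hqc : ((a1:ℂ))^2 = 2*(q:ℂ) := by exact_mod_cast congrArg (fun z : ℤ => (z : ℂ)) hq1
    have hα4 : α ^ 4 = -(((q ^ 2 : ℤ)) : ℂ) := by
      push_cast
      linear_combination (α^2 + (a1:ℂ)*α + (a1:ℂ)^2 - (q:ℂ)) * hα + ((a1:ℂ)*α - (q:ℂ)) * hqc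
    have hcr : ((q ^ 2 : ℤ) : ℝ) = Real.sqrt q ^ 4 := by
      rw [show (Real.sqrt q ^ 4 : ℝ) = (Real.sqrt q ^ 2) ^ 2 by ring, Real.sq_sqrt hrnn]
      push_cast
      ring
    have hinf := aux_inf q α a ha 4 (by norm_num) (q ^ 2) hα4 hcr
    have hex : ∃ n : ℕ, 0 < n ∧ -(a n) = ⌊2 * Real.sqrt q ^ n⌋ := by
      obtain ⟨n, hn1, hn2⟩ := hinf.nonempty
      exact ⟨n, hn1, hn2⟩
    rcases lt_trichotomy a1 0 with hneg | hzero | hpos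
    · have ha1neg : (a1:ℝ) < 0 := by exact_mod_cast hneg
      refine ⟨iff_of_true hex (Or.inr (Or.inr (Or.inr (Or.inl ?_)))), fun _ => hinf⟩
      rw [show (2*((q:ℤ):ℝ)) = (-(a1:ℝ))^2 by rw [neg_pow]; push_cast at hq1r ⊢; linarith,
        Real.sqrt_sq (by linarith)]
      ring
    · exfalso; rw [hzero] at hq1; simp at hq1; omega
    · have ha1pos : (0:ℝ) < (a1:ℝ) := by exact_mod_cast hpos
      refine ⟨iff_of_true hex (Or.inr (Or.inr (Or.inl ?_))), fun _ => hinf⟩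
      rw [show (2*((q:ℤ):ℝ)) = ((a1:ℝ))^2 by push_cast at hq1r ⊢; linarith,
        Real.sqrt_sq (by linarith)]
  · -- y = 3 : a1^2 = 3q
    have hq1 : a1 ^ 2 = 3 * q := by linarith
    have hq1r : (a1:ℝ)^2 = 3*(q:ℝ) := by exact_mod_cast hq1
    have hqc : ((a1:ℂ))^2 = 3*(q:ℂ) := by exact_mod_cast congrArg (fun z : ℤ => (z : ℂ)) hq1
    have hα3 : α ^ 3 = 2*(q:ℂ)*α - (a1:ℂ)*(q:ℂ) := by
      linear_combination (α + (a1:ℂ)) * hα + α * hqc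
    have hα6 : α ^ 6 = -(((q ^ 3 : ℤ)) : ℂ) := by
      push_cast
      linear_combination (α^3 + 2*(q:ℂ)*α - (a1:ℂ)*(q:ℂ)) * hα3 + 4*(q:ℂ)^2 * hα + (q:ℂ)^2 * hqc
    have hcr : ((q ^ 3 : ℤ) : ℝ) = Real.sqrt q ^ 6 := by
      rw [show (Real.sqrt q ^ 6 : ℝ) = (Real.sqrt q ^ 2) ^ 3 by ring, Real.sq_sqrt hrnn]
      push_cast
      ring
    have hinf := aux_inf q α a ha 6 (by norm_num) (q ^ 3) hα6 hcr
    have hex : ∃ n : ℕ, 0 < n ∧ -(a n) = ⌊2 * Real.sqrt q ^ n⌋ := by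
      obtain ⟨n, hn1, hn2⟩ := hinf.nonempty
      exact ⟨n, hn1, hn2⟩
    rcases lt_trichotomy a1 0 with hneg | hzero | hpos
    · have ha1neg : (a1:ℝ) < 0 := by exact_mod_cast hneg
      refine ⟨iff_of_true hex (Or.inr (Or.inr (Or.inr (Or.inr (Or.inr (Or.inl ?_)))))), fun _ => hinf⟩
      rw [show (3*((q:ℤ):ℝ)) = (-(a1:ℝ))^2 by rw [neg_pow]; push_cast at hq1r ⊢; linarith,
        Real.sqrt_sq (by linarith)]
      ring
    · exfalso; rw [hzero] at hq1; simp at hq1; omega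
    · have ha1pos : (0:ℝ) < (a1:ℝ) := by exact_mod_cast hpos
      refine ⟨iff_of_true hex (Or.inr (Or.inr (Or.inr (Or.inr (Or.inl ?_))))), fun _ => hinf⟩
      rw [show (3*((q:ℤ):ℝ)) = ((a1:ℝ))^2 by push_cast at hq1r ⊢; linarith,
        Real.sqrt_sq (by linarith)]
  · -- y = 4 : a1^2 = 4q
    have hq1 : a1 ^ 2 = 4 * q := by linarith
    have hq1r : (a1:ℝ)^2 = 4*(q:ℝ) := by exact_mod_cast hq1
    have h4c : ((a1:ℂ))^2 = 4*(q:ℂ) := by exact_mod_cast congrArg (fun z : ℤ => (z : ℂ)) hq1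
    rcases Int.even_or_odd a1 with ⟨t, ht⟩ | hodd
    · -- a1 = 2t, q = t^2
      have hqt : q = t ^ 2 := by
        have h44 : 4 * q = 4 * t ^ 2 := by linear_combination -hq1 + (a1 + 2*t) * ht
        linarith
      have hsq0 : (2*α - (a1:ℂ))^2 = 0 := by linear_combination 4 * hα + h4c
      have h2α : 2*α - (a1:ℂ) = 0 := by
        exact pow_eq_zero_iff (n := 2) (by norm_num) |>.mp hsq0
      have htc : (a1:ℂ) = 2*(t:ℂ) := by exact_mod_cast congrArg (fun z : ℤ => (z : ℂ)) (by omega : a1 = 2*t)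
      have hαt : α = (t : ℂ) := by linear_combination (1/2 : ℂ) * h2α + (1/2 : ℂ) * htc
      rcases lt_trichotomy a1 0 with hneg | hzero | hpos
      · -- a1 < 0, t < 0 : solutions with m = 1, c = -t, RHS = -(2 sqrt q)
        have htneg : t < 0 := by omega
        have hbt : 2 ≤ -t := by nlinarith [sq_nonneg (t + 1)]
        have hc1 : α ^ 1 = -(((-t : ℤ)) : ℂ) := by rw [pow_one, hαt]; push_cast; ring
        have hrt : Real.sqrt q = ((-t : ℤ) : ℝ) := by
          rw [show ((q:ℤ):ℝ) = (((-t:ℤ)):ℝ)^2 by push_cast; rw [hqt]; push_cast; ring]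
          exact Real.sqrt_sq (by exact_mod_cast (show (0:ℤ) ≤ -t by omega))
        have hcr : ((-t : ℤ) : ℝ) = Real.sqrt q ^ 1 := by rw [pow_one, hrt]
        have hinf := aux_inf q α a ha 1 (by norm_num) (-t) hc1 hcr
        refine ⟨iff_of_true ?_ (Or.inr (Or.inr (Or.inr (Or.inr (Or.inr (Or.inr ?_)))))), fun _ => hinf⟩
        · obtain ⟨n, hn1, hn2⟩ := hinf.nonempty
          exact ⟨n, hn1, hn2⟩
        · rw [hrt]
          push_cast
          have : (a1:ℝ) = 2*(t:ℝ) := by exact_mod_cast htc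
          linarith
      · exfalso; rw [hzero] at hq1; simp at hq1; omega
      · -- a1 > 0, t ≥ 2 : no solutions, RHS false
        have htpos : 0 < t := by omega
        have hbt : 2 ≤ t := by nlinarith [sq_nonneg (t - 1)]
        have hnosol := no_sol_lin q t hbt hqt α hαt a ha
        have hrhs : ¬ ((a1 : ℝ) = 0 ∨ (a1 : ℝ) = Real.sqrt q ∨ (a1 : ℝ) = Real.sqrt (2 * q) ∨
            (a1 : ℝ) = -Real.sqrt (2 * q) ∨ (a1 : ℝ) = Real.sqrt (3 * q) ∨
            (a1 : ℝ) = -Real.sqrt (3 * q) ∨ (a1 : ℝ) = -(2 * Real.sqrt q)) := by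
          have ha1pos : (0:ℝ) < (a1:ℝ) := by exact_mod_cast hpos
          rintro (h | h | h | h | h | h | h)
          · linarith
          · rw [h, Real.sq_sqrt hrnn] at hq1r; linarith
          · rw [h, Real.sq_sqrt (by positivity : (0:ℝ) ≤ 2*(q:ℝ))] at hq1r; linarith
          · linarith [Real.sqrt_nonneg (2*(q:ℝ))]
          · rw [h, Real.sq_sqrt (by positivity : (0:ℝ) ≤ 3*(q:ℝ))] at hq1r; linarith
          · linarith [Real.sqrt_nonneg (3*(q:ℝ))]
          · linarith [Real.sqrt_nonneg ((q:ℝ))]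
        exact ⟨iff_of_false hnosol hrhs, fun hex => absurd hex hnosol⟩
    · exfalso
      have h := hodd.pow (n := 2)
      rw [hq1] at h
      rcases h with ⟨c, hc⟩
      omega
end

section
/- Let q, a₁ be integers with q ≥ 1, and let β ∈ ℂ be a root of the polynomial X² − (a₁/√q)X + 1. Then β is a root of unity if and only if a₁² ∈ {0, q, 2q, 3q, 4q}, i.e., if and only if a₁ ∈ {0, ±√q, ±√(2q), ±√(3q), ±2√q}. -/
/-- Let `q, a₁` be integers with `q ≥ 1`, and `β` a complex root of
`X² − (a₁/√q)X + 1`. Then `β` is a root of unity iff `a₁² ∈ {0, q, 2q, 3q, 4q}`. -/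
theorem beta_root_of_unity_iff (q a1 : ℤ) (hq : 1 ≤ q) (β : ℂ)
    (hβ : β ^ 2 - ((a1 : ℂ) / (Real.sqrt q : ℂ)) * β + 1 = 0) :
    (∃ k : ℕ, 0 < k ∧ β ^ k = 1) ↔
      (a1 ^ 2 = 0 ∨ a1 ^ 2 = q ∨ a1 ^ 2 = 2 * q ∨ a1 ^ 2 = 3 * q ∨ a1 ^ 2 = 4 * q) := by
  have hqR : (0 : ℝ) < (q : ℝ) := by exact_mod_cast hq
  have hsqR : Real.sqrt q ^ 2 = (q : ℝ) := Real.sq_sqrt hqR.le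
  have hsC : ((Real.sqrt q : ℝ) : ℂ) ≠ 0 := by
    simp only [ne_eq, Complex.ofReal_eq_zero]
    positivity
  have hqC : ((q : ℂ)) ≠ 0 := by exact_mod_cast hqR.ne'
  set t : ℂ := (a1 : ℂ) / (Real.sqrt q : ℂ) with ht_def
  have hsqC : ((Real.sqrt q : ℝ) : ℂ) ^ 2 = (q : ℂ) := by
    exact_mod_cast congrArg (Complex.ofReal) hsqR
  have ht2 : t ^ 2 = (a1 : ℂ) ^ 2 / (q : ℂ) := by
    rw [ht_def, div_pow, hsqC]
  have hb2 : β ^ 2 = t * β - 1 := by linear_combination hβ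
  constructor
  · rintro ⟨k, hk, hβk⟩
    have hβ0 : β ≠ 0 := by
      intro h; rw [h] at hβ; simp at hβ
    -- t = β + β^(k-1)
    have htβ : t = β + β ^ (k - 1) := by
      have hβpow : β ^ (k - 1) * β = 1 := by
        rw [← pow_succ, Nat.sub_add_cancel hk]; exact hβk
      have : t * β = (β + β ^ (k - 1)) * β := by
        rw [add_mul, hβpow]; linear_combination -hβ
      exact mul_right_cancel₀ hβ0 this
    have hβint : IsIntegral ℤ β := by
      refine ⟨Polynomial.X ^ k - Polynomial.C 1, Polynomial.monic_X_pow_sub_C 1 hk.ne', ?_⟩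
      simp [hβk]
    have htint : IsIntegral ℤ (t ^ 2) := by
      rw [htβ]
      exact (hβint.add (hβint.pow _)).pow 2
    have htalg : t ^ 2 = algebraMap ℚ ℂ ((a1 : ℚ) ^ 2 / (q : ℚ)) := by
      rw [ht2]; push_cast; norm_cast
    rw [htalg, isIntegral_algebraMap_iff (algebraMap ℚ ℂ).injective] at htint
    obtain ⟨m, hm⟩ := IsIntegrallyClosed.isIntegral_iff.mp htint
    have hqQ : ((q : ℚ)) ≠ 0 := by exact_mod_cast hqR.ne'
    have hmq : a1 ^ 2 = m * q := by
      have : (m : ℚ) * q = (a1 : ℚ) ^ 2 := by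
        rw [eq_intCast] at hm
        rw [eq_div_iff hqQ] at hm; exact_mod_cast hm
      exact_mod_cast this.symm
    -- bound on m
    have habs : ‖β‖ = 1 := by
      have h1 : ‖β‖ ^ k = 1 := by
        rw [← norm_pow, hβk, norm_one]
      rcases pow_eq_one_iff_cases.mp h1 with h | h | h
      · omega
      · simpa using h
      · exfalso
        have := norm_nonneg β
        nlinarith [h.1]
    have htle : ‖t‖ ≤ 2 := by
      rw [htβ]
      calc ‖β + β ^ (k - 1)‖ ≤ ‖β‖ + ‖β ^ (k - 1)‖ :=
            norm_add_le _ _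
        _ = 2 := by rw [norm_pow, habs]; norm_num
    have htre : ‖t‖ = |(a1 : ℝ) / Real.sqrt q| := by
      rw [ht_def]
      rw [show ((a1 : ℂ) / (Real.sqrt q : ℂ)) = (((a1 : ℝ) / Real.sqrt q : ℝ) : ℂ) by push_cast; ring]
      rw [Complex.norm_real, Real.norm_eq_abs]
    have hR : ((a1 : ℝ) / Real.sqrt q) ^ 2 ≤ 4 := by
      have := htre ▸ htle
      nlinarith [abs_nonneg ((a1 : ℝ) / Real.sqrt q), sq_abs ((a1 : ℝ) / Real.sqrt q)]
    have ha4 : (a1 : ℝ) ^ 2 ≤ 4 * q := by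
      have hs0 : Real.sqrt q > 0 := Real.sqrt_pos.mpr hqR
      rw [div_pow, hsqR, div_le_iff₀ hqR] at hR
      linarith
    have ha4' : a1 ^ 2 ≤ 4 * q := by exact_mod_cast ha4
    have hm0 : 0 ≤ m := by nlinarith [sq_nonneg a1]
    have hm4 : m ≤ 4 := by nlinarith
    interval_cases m <;> omega
  · intro h
    have key : ∀ c : ℤ, a1 ^ 2 = c * q → t ^ 2 = (c : ℂ) := by
      intro c hc
      rw [ht2]
      have : ((a1 : ℂ)) ^ 2 = (c : ℂ) * (q : ℂ) := by exact_mod_cast congrArg (Int.cast : ℤ → ℂ) hc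
      rw [this, mul_div_assoc, div_self hqC, mul_one]
    rcases h with h | h | h | h | h
    · -- c = 0 : β^4 = 1
      have ht : t ^ 2 = 0 := by simpa using key 0 (by linarith)
      have ht0 : t = 0 := by
        exact pow_eq_zero_iff (n := 2) (by norm_num) |>.mp ht
      exact ⟨4, by norm_num, by linear_combination (β ^ 2 - t * β - 1) * hβ + (2 * β ^ 3 - t * β ^ 2) * ht0⟩
    · -- c = 1 : β^6 = 1
      have ht : t ^ 2 = 1 := by simpa using key 1 (by linarith)
      have h3 : β ^ 3 = -t := by
        linear_combination (β + t) * hb2 + β * ht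
      exact ⟨6, by norm_num, by linear_combination (β ^ 3 - t) * h3 + ht⟩
    · -- c = 2 : β^8 = 1
      have ht : t ^ 2 = 2 := by simpa using key 2 h
      have h3 : β ^ 3 = β - t := by
        linear_combination (β + t) * hb2 + β * ht
      have h4 : β ^ 4 = -1 := by
        linear_combination β * h3 + hβ
      exact ⟨8, by norm_num, by linear_combination (β ^ 4 - 1) * h4⟩
    · -- c = 3 : β^12 = 1
      have ht : t ^ 2 = 3 := by simpa using key 3 h
      have h3 : β ^ 3 = 2 * β - t := by
        linear_combination (β + t) * hb2 + β * ht
      have h6 : β ^ 6 = -1 := by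
        linear_combination (β ^ 3 + 2 * β - t) * h3 + 4 * hb2 + ht
      exact ⟨12, by norm_num, by linear_combination (β ^ 6 - 1) * h6⟩
    · -- c = 4 : β^2 = 1
      have ht : t ^ 2 = 4 := by simpa using key 4 h
      have h0 : (β - t / 2) ^ 2 = 0 := by
        linear_combination hβ + (1 / 4 : ℂ) * ht
      have hβt : β = t / 2 :=
        sub_eq_zero.mp (pow_eq_zero_iff (n := 2) (by norm_num) |>.mp h0)
      exact ⟨2, by norm_num, by rw [hβt]; rw [div_pow]; rw [ht]; norm_num⟩
end

section
/- Let q, a₁ be integers with q ≥ 1 and a₁² ≤ 4q. For every positive integer n, −aₙ = ⌊2·q^{n/2}⌋ holds if and only if |βⁿ + 1| < q^{−n/4}. -/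
/-- For integers `q, a₁` with `q ≥ 1` and `a₁² ≤ 4q`, let `α` be the root of
`X² − a₁X + q` with nonnegative imaginary part, `β = α/√q`, and `aₙ = αⁿ + conj(α)ⁿ`.
Then for every positive integer `n`, `−aₙ = ⌊2·q^{n/2}⌋` iff `|βⁿ + 1| < q^{−n/4}`. -/
theorem maximal_iff_beta_close (q a1 : ℤ) (hq : 1 ≤ q) (ha1 : a1 ^ 2 ≤ 4 * q)
    (α β : ℂ) (hα : α ^ 2 - a1 * α + q = 0) (him : 0 ≤ α.im)
    (hβ : β = α / (Real.sqrt q : ℂ))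
    (a : ℕ → ℤ) (ha : ∀ n : ℕ, (a n : ℂ) = α ^ n + (starRingEnd ℂ) α ^ n)
    (n : ℕ) (hn : 0 < n) :
    -(a n) = ⌊2 * Real.sqrt q ^ n⌋ ↔ ‖β ^ n + 1‖ < (q : ℝ) ^ (-(n : ℝ) / 4) := by
  have hq0 : (0:ℝ) < (q:ℝ) := by exact_mod_cast hq
  have hr0 : 0 < Real.sqrt (q:ℝ) := Real.sqrt_pos.mpr hq0
  have hr2 : Real.sqrt (q:ℝ) ^ 2 = (q:ℝ) := Real.sq_sqrt hq0.le
  set r : ℝ := Real.sqrt (q:ℝ) with hrdef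
  have hQ0 : (0:ℝ) < r ^ n := pow_pos hr0 n
  have hconj : (starRingEnd ℂ) α ^ 2 - (a1:ℂ) * (starRingEnd ℂ) α + (q:ℂ) = 0 := by
    have h := congrArg (starRingEnd ℂ) hα
    simpa using h
  have hmul : α * (starRingEnd ℂ) α = (q:ℂ) := by
    by_cases hc : (starRingEnd ℂ) α = α
    · have him0 : α.im = 0 := by
        have h := congrArg Complex.im hc
        simp [Complex.conj_im] at h
        linarith
      have hαt : α = ((α.re : ℝ) : ℂ) := by
        apply Complex.ext <;> simp [him0]
      set t : ℝ := α.re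
      have h1 : t ^ 2 - (a1:ℝ) * t + (q:ℝ) = 0 := by
        have h := hα
        rw [hαt] at h
        exact_mod_cast h
      have ha1' : (a1:ℝ)^2 ≤ 4*(q:ℝ) := by exact_mod_cast ha1
      have h3 : 2 * t = (a1:ℝ) := by nlinarith [sq_nonneg (2*t - (a1:ℝ))]
      have h4 : t * t = (q:ℝ) := by nlinarith
      rw [hαt, Complex.conj_ofReal]
      exact_mod_cast congrArg (Complex.ofReal) h4
    · have hdiff : (α - (starRingEnd ℂ) α) * (α + (starRingEnd ℂ) α - (a1:ℂ)) = 0 := by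
        linear_combination hα - hconj
      rcases mul_eq_zero.mp hdiff with h | h
      · exact absurd (sub_eq_zero.mp h).symm hc
      · linear_combination (α : ℂ) * h - hα
  have habsα : ‖α‖ = r := by
    have hnsq : Complex.normSq α = (q:ℝ) := by
      have h := (Complex.mul_conj α).symm.trans hmul
      exact_mod_cast h
    rw [Complex.norm_def, hnsq]
  have hrC0 : ((r:ℂ)) ≠ 0 := by exact_mod_cast hr0.ne'
  have hββ : β * (starRingEnd ℂ) β = 1 := by
    rw [hβ, map_div₀, Complex.conj_ofReal, div_mul_div_comm, hmul]
    rw [div_eq_one_iff_eq (mul_ne_zero hrC0 hrC0)]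
    have h : ((r:ℝ)*r : ℝ) = (q:ℝ) := by nlinarith [hr2]
    exact_mod_cast h.symm
  have hβn1 : β^n * (starRingEnd ℂ) β ^ n = 1 := by
    rw [← mul_pow, hββ, one_pow]
  have hsum : β^n + (starRingEnd ℂ) β ^ n = ((((a n : ℝ)) / r^n : ℝ) : ℂ) := by
    rw [hβ, map_div₀, Complex.conj_ofReal, div_pow, div_pow, ← add_div, ← ha n]
    push_cast
    ring
  have hSS : (β^n + 1) * (starRingEnd ℂ) (β^n + 1) = ((2 + (a n : ℝ)/r^n : ℝ) : ℂ) := by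
    have hcc : (starRingEnd ℂ) (β^n+1) = (starRingEnd ℂ) β ^ n + 1 := by
      rw [map_add, map_pow, map_one]
    rw [hcc]
    have he : ((2 + (a n : ℝ)/r^n : ℝ) : ℂ) = 2 + ((((a n : ℝ)) / r^n : ℝ):ℂ) := by
      push_cast; ring
    rw [he]
    linear_combination hβn1 + hsum
  have h1 : ‖β^n+1‖ ^ 2 = 2 + (a n : ℝ)/r^n := by
    have h := (Complex.mul_conj (β^n+1)).symm.trans hSS
    have h' : Complex.normSq (β^n+1) = 2 + (a n : ℝ)/r^n := by exact_mod_cast h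
    rw [Complex.sq_norm, h']
  have hbound : |((a n : ℝ))| ≤ 2 * r^n := by
    have h0 : ‖((a n : ℤ) : ℂ)‖ ≤ 2 * r^n := by
      rw [ha n]
      calc ‖α^n + (starRingEnd ℂ) α ^ n‖
          ≤ ‖α^n‖ + ‖(starRingEnd ℂ) α ^ n‖ :=
            norm_add_le _ _
        _ = r^n + r^n := by rw [norm_pow, norm_pow, Complex.norm_conj, habsα]
        _ = 2 * r^n := by ring
    rwa [Complex.norm_intCast] at h0
  have hc0 : 0 < (q:ℝ) ^ (-(n:ℝ)/4) := Real.rpow_pos_of_pos hq0 _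
  have hQrpow : r^n = (q:ℝ) ^ ((n:ℝ)/2) := by
    rw [hrdef, Real.sqrt_eq_rpow, ← Real.rpow_natCast ((q:ℝ) ^ ((1:ℝ)/2)) n,
      ← Real.rpow_mul hq0.le]
    congr 1
    ring
  have hc2 : ((q:ℝ) ^ (-(n:ℝ)/4)) ^ 2 = (r^n)⁻¹ := by
    rw [hQrpow, ← Real.rpow_natCast ((q:ℝ) ^ (-(n:ℝ)/4)) 2, ← Real.rpow_mul hq0.le,
      ← Real.rpow_neg hq0.le]
    congr 1
    push_cast
    ring
  have key : (2 + (a n : ℝ)/r^n < (r^n)⁻¹) ↔ (2*r^n + (a n : ℝ) < 1) := by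
    rw [← mul_lt_mul_iff_left₀ hQ0, add_mul, div_mul_cancel₀ _ hQ0.ne', inv_mul_cancel₀ hQ0.ne']
  constructor
  · intro hL
    have hfl : 2*r^n - 1 < ((⌊2*r^n⌋ : ℤ) : ℝ) := Int.sub_one_lt_floor _
    have hcast : ((-(a n) : ℤ) : ℝ) = -((a n : ℝ)) := by push_cast; ring
    rw [hL] at hcast
    have hA1 : 2*r^n + (a n : ℝ) < 1 := by linarith
    have h2' : ‖β^n+1‖^2 < ((q:ℝ) ^ (-(n:ℝ)/4))^2 := by
      rw [h1, hc2]; exact key.mpr hA1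
    exact lt_of_pow_lt_pow_left₀ 2 hc0.le h2'
  · intro hR
    have h2' : ‖β^n+1‖^2 < ((q:ℝ) ^ (-(n:ℝ)/4))^2 :=
      pow_lt_pow_left₀ hR (norm_nonneg _) two_ne_zero
    rw [h1, hc2] at h2'
    have hA1 : 2*r^n + (a n : ℝ) < 1 := key.mp h2'
    have hb := abs_le.mp hbound
    rw [eq_comm, Int.floor_eq_iff]
    push_cast
    constructor
    · linarith [hb.1]
    · linarith
end

section
/- Let q, a₁ be integers with q ≥ 2 and a₁² ≤ 4q such that the pair (q, a₁) is ordinary (i.e., β is not a root of unity). If −aₙ = ⌊2·q^{n/2}⌋ for some positive integer n, then q is not a perfect square and n is odd. -/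
/-- For an ordinary pair `(q, a₁)`, if `−aₙ = ⌊2·q^{n/2}⌋` for some positive
integer `n`, then `q` is not a perfect square and `n` is odd. -/
theorem ordinary_not_square_and_odd (q a1 : ℤ) (hq : 2 ≤ q) (ha1 : a1 ^ 2 ≤ 4 * q)
    (α β : ℂ) (hα : α ^ 2 - a1 * α + q = 0) (him : 0 ≤ α.im)
    (hβ : β = α / (Real.sqrt q : ℂ))
    (hord : ¬ ∃ k : ℕ, 0 < k ∧ β ^ k = 1)
    (a : ℕ → ℤ) (ha : ∀ n : ℕ, (a n : ℂ) = α ^ n + (starRingEnd ℂ) α ^ n)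
    (n : ℕ) (hn : 0 < n) (hmax : -(a n) = ⌊2 * Real.sqrt q ^ n⌋) :
    ¬ IsSquare q ∧ Odd n := by
  have hq0 : (0:ℝ) < (q:ℝ) := by exact_mod_cast lt_of_lt_of_le two_pos hq
  set s : ℝ := Real.sqrt q with hsdef
  have hs : 0 < s := Real.sqrt_pos.mpr hq0
  have hs2 : s ^ 2 = (q:ℝ) := Real.sq_sqrt hq0.le
  have ha1R : ((a1:ℝ)) ^ 2 ≤ 4 * (q:ℝ) := by exact_mod_cast ha1
  -- conjugate equation
  have hconj : (starRingEnd ℂ) α ^ 2 - a1 * (starRingEnd ℂ) α + q = 0 := by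
    have := congrArg (starRingEnd ℂ) hα
    simpa [map_pow, map_mul, map_sub, map_add] using this
  have hnorm : Complex.normSq α = (q:ℝ) := by
    have hfac : (α - (starRingEnd ℂ) α) * (α + (starRingEnd ℂ) α - a1) = 0 := by
      linear_combination hα - hconj
    rcases mul_eq_zero.mp hfac with h | h
    · -- α is real
      have him0 : α.im = 0 := by
        have : (starRingEnd ℂ) α = α := by linear_combination -h
        exact (Complex.conj_eq_iff_im.mp this)
      have hre : α.re ^ 2 - (a1:ℝ) * α.re + (q:ℝ) = 0 := by
        have := congrArg Complex.re hα
        simpa [Complex.add_re, Complex.sub_re, Complex.mul_re, Complex.sq_norm,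
          pow_two, Complex.mul_im, him0] using this
      have hsq : ((a1:ℝ) - 2 * α.re) ^ 2 ≤ 0 := by nlinarith
      have heq : (a1:ℝ) = 2 * α.re := by nlinarith [sq_nonneg ((a1:ℝ) - 2 * α.re)]
      have : α.re ^ 2 = (q:ℝ) := by nlinarith
      simp [Complex.normSq_apply, him0, ← pow_two]
      linarith
    · -- conj α = a1 - α
      have hc : (starRingEnd ℂ) α = a1 - α := by linear_combination h
      have : (Complex.normSq α : ℂ) = (q:ℂ) := by
        rw [← Complex.mul_conj, hc]
        linear_combination -hα
      exact_mod_cast this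
  have habs : ‖α‖ = s := by
    rw [Complex.norm_def, hnorm]
  have key : ∀ m : ℤ, (m:ℝ) ≠ 2 * s ^ n := by
    intro m hm
    apply hord
    have hfl : ⌊2 * s ^ n⌋ = m := by rw [← hm]; exact Int.floor_intCast m
    have han : a n = -m := by rw [hfl] at hmax; linarith
    have hreC : (a n : ℂ) = ((2 * (α ^ n).re : ℝ) : ℂ) := by
      rw [ha n, ← map_pow]; exact_mod_cast Complex.add_conj (α ^ n)
    have hre : ((a n : ℤ) : ℝ) = 2 * (α ^ n).re := by exact_mod_cast hreC
    have h1 : (α ^ n).re = -(s ^ n) := by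
      rw [han] at hre
      push_cast at hre
      linarith [hm]
    have habsn : ‖α ^ n‖ = s ^ n := by rw [norm_pow, habs]
    have him0 : (α ^ n).im = 0 := by
      have h2 := Complex.sq_norm (α ^ n)
      rw [habsn, Complex.normSq_apply] at h2
      have h3 : (α ^ n).im * (α ^ n).im = 0 := by
        linear_combination -h2 + (s ^ n - (α ^ n).re) * h1
      exact mul_self_eq_zero.mp h3
    have hαn : α ^ n = -(((s ^ n : ℝ)) : ℂ) := by
      apply Complex.ext
      · rw [Complex.neg_re, Complex.ofReal_re]; exact h1
      · rw [Complex.neg_im, Complex.ofReal_im, neg_zero]; exact him0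
    have hsn : ((s ^ n : ℝ) : ℂ) ≠ 0 := by
      simp only [ne_eq, Complex.ofReal_eq_zero]
      positivity
    have hβn : β ^ n = -1 := by
      rw [hβ, div_pow, hαn, ← Complex.ofReal_pow, neg_div, div_self hsn]
    exact ⟨n * 2, by omega, by rw [pow_mul, hβn]; norm_num⟩
  constructor
  · rintro ⟨t, ht⟩
    have hst : s = |(t:ℝ)| := by
      rw [hsdef, ht]; push_cast
      exact Real.sqrt_mul_self_eq_abs _
    exact key (2 * |t| ^ n) (by push_cast [hst]; ring)
  · by_contra h
    rw [Nat.not_odd_iff_even] at h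
    obtain ⟨k, hk⟩ := h
    have hsn : s ^ n = (q:ℝ) ^ k := by
      rw [hk, ← two_mul, pow_mul, hs2]
    exact key (2 * q ^ k) (by push_cast [hsn]; ring)
end

section
/- Let q, a₁ be integers with q ≥ 2 and a₁² ≤ 4q. If n is a positive integer such that −aₙ = ⌊2·q^{n/2}⌋, then there exists an odd integer m with |m| ≤ n such that |m·π + n·arg(β)| = |arg(−βⁿ)| < (π/3)·q^{−n/4}, where arg denotes the principal value of the argument (taking values in (−π, π]). -/
set_option maxHeartbeats 2000000 in
/-- If `−aₙ = ⌊2·q^{n/2}⌋` for a positive integer `n`, then there is an odd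
integer `m` with `|m| ≤ n` such that `|m·π + n·arg β| = |arg(−βⁿ)| < (π/3)·q^{−n/4}`. -/
theorem arg_approximation (q a1 : ℤ) (hq : 2 ≤ q) (ha1 : a1 ^ 2 ≤ 4 * q)
    (α β : ℂ) (hα : α ^ 2 - a1 * α + q = 0) (him : 0 ≤ α.im)
    (hβ : β = α / (Real.sqrt q : ℂ))
    (a : ℕ → ℤ) (ha : ∀ n : ℕ, (a n : ℂ) = α ^ n + (starRingEnd ℂ) α ^ n)
    (n : ℕ) (hn : 0 < n) (hmax : -(a n) = ⌊2 * Real.sqrt q ^ n⌋) :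
    ∃ m : ℤ, Odd m ∧ |m| ≤ (n : ℤ) ∧
      |(m : ℝ) * Real.pi + (n : ℝ) * Complex.arg β| = |Complex.arg (-β ^ n)| ∧
      |Complex.arg (-β ^ n)| < Real.pi / 3 * (q : ℝ) ^ (-(n : ℝ) / 4) := by
  have hq0 : (0:ℝ) < (q:ℝ) := by exact_mod_cast lt_of_lt_of_le zero_lt_two hq
  have hq2 : (2:ℝ) ≤ (q:ℝ) := by exact_mod_cast hq
  have ha1' : ((a1:ℝ))^2 ≤ 4 * (q:ℝ) := by exact_mod_cast ha1
  -- |α|² = q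
  have h1 := congrArg Complex.re hα
  have h2 := congrArg Complex.im hα
  simp [pow_two, Complex.add_re, Complex.sub_re, Complex.mul_re, Complex.mul_im,
    Complex.add_im, Complex.sub_im] at h1 h2
  have habs : α.re ^ 2 + α.im ^ 2 = (q:ℝ) := by
    have h2' : α.im * (2 * α.re - (a1:ℝ)) = 0 := by ring_nf; ring_nf at h2; linarith
    rcases mul_eq_zero.mp h2' with h | h
    · have hsq : (2 * α.re - (a1:ℝ))^2 = (a1:ℝ)^2 - 4 * q := by nlinarith [h1, h]
      have : 2 * α.re - (a1:ℝ) = 0 := by nlinarith [sq_nonneg (2 * α.re - (a1:ℝ))]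
      nlinarith [h1, h, this]
    · have h3 : (2 * α.re - (a1:ℝ)) * α.re = 0 := by rw [h]; ring
      nlinarith [h1, h3]
  have hαabs : ‖α‖ = Real.sqrt q := by
    rw [Complex.norm_def, Complex.normSq_apply]
    congr 1
    rw [← habs]; ring
  have hsq : (0:ℝ) < Real.sqrt q := Real.sqrt_pos.mpr hq0
  have hβabs : ‖β‖ = 1 := by
    rw [hβ, norm_div, hαabs, Complex.norm_real, Real.norm_eq_abs, abs_of_pos hsq, div_self hsq.ne']
  have hβn0 : (-β ^ n) ≠ 0 := by
    simp only [ne_eq, neg_eq_zero, pow_eq_zero_iff hn.ne']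
    intro h; rw [h, norm_zero] at hβabs; norm_num at hβabs
  have hβnabs : ‖-β ^ n‖ = 1 := by
    rw [norm_neg, norm_pow, hβabs, one_pow]
  set φ := Complex.arg (-β ^ n) with hφdef
  -- real part of β^n
  have hα_re : (α ^ n).re = (a n : ℝ) / 2 := by
    have := congrArg Complex.re (ha n)
    simp only [Complex.intCast_re, Complex.add_re, ← map_pow, Complex.conj_re] at this
    linarith
  have hre : (β ^ n).re = (a n : ℝ) / (2 * Real.sqrt q ^ n) := by
    rw [hβ, div_pow, ← Complex.ofReal_pow, Complex.div_ofReal_re, hα_re]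
    rw [div_div]
  have hcos : Real.cos φ = (⌊2 * Real.sqrt q ^ n⌋ : ℝ) / (2 * Real.sqrt q ^ n) := by
    rw [hφdef, Complex.cos_arg hβn0, hβnabs, div_one, Complex.neg_re, hre, ← hmax]
    push_cast; ring
  clear_value φ
  set X := 2 * Real.sqrt q ^ n with hXdef
  have hsq14 : (1.414:ℝ) ≤ Real.sqrt q := by
    nlinarith [Real.sq_sqrt hq0.le, Real.sqrt_nonneg (q:ℝ), hq2]
  have hXpow : Real.sqrt q ≤ Real.sqrt q ^ n := le_self_pow₀ (by linarith) hn.ne'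
  have hX28 : (2.828:ℝ) ≤ X := by rw [hXdef]; linarith
  have hX0 : (0:ℝ) < X := by linarith
  clear_value X
  clear hre hα_re ha hα h1 h2 habs hαabs
  have hφpi : |φ| ≤ Real.pi := by rw [hφdef]; exact Complex.abs_arg_le_pi _
  have hpi := Real.pi_gt_d6
  have hBpos : (0:ℝ) < Real.pi / 3 * (q : ℝ) ^ (-(n : ℝ) / 4) := by positivity
  -- the quantitative bound
  have hφB : |φ| < Real.pi / 3 * (q : ℝ) ^ (-(n : ℝ) / 4) := by
    rcases eq_or_lt_of_le (Int.floor_le X) with hfl | hfl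
    · -- X is an integer, cos φ = 1, φ = 0
      have hc1 : Real.cos φ = 1 := by rw [hcos, hfl, div_self hX0.ne']
      have hφ0 : φ = 0 := by
        rw [Real.cos_eq_one_iff_of_lt_of_lt (by cases abs_le.mp hφpi; linarith)
          (by cases abs_le.mp hφpi; linarith)] at hc1
        exact hc1
      rw [hφ0, abs_zero]; exact hBpos
    · have h1X : 1 - 1/X < Real.cos φ := by
        rw [hcos, show (1 - 1/X) = (X-1)/X by field_simp]
        exact (div_lt_div_iff_of_pos_right hX0).mpr (Int.sub_one_lt_floor X)
      set c := 1/X with hcdef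
      have hc_pos : 0 < c := by rw [hcdef]; positivity
      have hc2X : c * X = 1 := by rw [hcdef]; field_simp
      clear_value c
      have hc : c ≤ 0.354 := by
        have h1 : c * 2.828 ≤ c * X := mul_le_mul_of_nonneg_left hX28 hc_pos.le
        linarith
      have hφ1 : |φ| ≤ 1 := by
        by_contra h
        push_neg at h
        have hcos1 : Real.cos 1 ≤ 53/96 := by
          have := abs_le.mp (Real.cos_bound (x := 1) (by norm_num))
          norm_num at this ⊢
          linarith [this.2]
        have hle : Real.cos φ ≤ Real.cos 1 := by
          rw [← Real.cos_abs]
          exact Real.cos_le_cos_of_nonneg_of_le_pi (by norm_num) hφpi h.le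
        linarith
      have hbd := abs_le.mp (Real.cos_bound hφ1)
      have habs4 : |φ|^4 = φ^4 := by
        rw [show (4:ℕ) = 2*2 from rfl, pow_mul, sq_abs, ← pow_mul]
      rw [habs4] at hbd
      have hstep : φ^2/2 - φ^4*(5/96) < c := by linarith [hbd.2]
      have hφ2 : φ^2 ≤ 1 := by nlinarith [sq_abs φ, hφ1, abs_nonneg φ]
      have h4 : φ^4 ≤ φ^2 := by nlinarith [sq_nonneg φ]
      have hA : φ^2 < (96/43) * c := by nlinarith
      have hφ2' : φ^2 ≤ 0.791 := by linarith
      have hkey : φ^2 < 2.1797 * c := by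
        nlinarith [mul_le_mul_of_nonneg_left hφ2' (sq_nonneg φ)]
      have hXrpow : Real.sqrt q ^ n = (q:ℝ) ^ ((n:ℝ)/2) := by
        rw [← Real.rpow_natCast (Real.sqrt (q:ℝ)) n, Real.sqrt_eq_rpow,
          ← Real.rpow_mul hq0.le]
        congr 1; ring
      have hq4 : ((q:ℝ) ^ (-(n:ℝ)/4))^2 = 2 * c := by
        rw [← Real.rpow_natCast ((q:ℝ) ^ (-(n:ℝ)/4)) 2, ← Real.rpow_mul hq0.le,
          show (-(n:ℝ)/4) * ((2:ℕ):ℝ) = -((n:ℝ)/2) by push_cast; ring, Real.rpow_neg hq0.le, ← hXrpow,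
          hcdef, hXdef]
        rw [eq_comm]
        field_simp
      refine lt_of_pow_lt_pow_left₀ 2 hBpos.le ?_
      rw [mul_pow, hq4, sq_abs]
      nlinarith [sq_nonneg (Real.pi - 3.141592)]
  -- strict bound |φ| < π
  have hq41 : (q:ℝ) ^ (-(n : ℝ) / 4) ≤ 1 :=
    Real.rpow_le_one_of_one_le_of_nonpos (by linarith) (by have : (0:ℝ) ≤ (n:ℝ) := n.cast_nonneg; linarith)
  have hφltpi : |φ| < Real.pi := by
    calc |φ| < Real.pi / 3 * (q : ℝ) ^ (-(n : ℝ) / 4) := hφB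
    _ ≤ Real.pi / 3 * 1 := by
        apply mul_le_mul_of_nonneg_left hq41 (by linarith)
    _ < Real.pi := by linarith
  -- construct m
  have hβ0 : β ≠ 0 := by intro h; rw [h, norm_zero] at hβabs; norm_num at hβabs
  have hexp1 : Complex.exp ((φ:ℂ) * Complex.I) = -β ^ n := by
    have h := Complex.norm_mul_exp_arg_mul_I (-β ^ n)
    rwa [hβnabs, Complex.ofReal_one, one_mul, ← hφdef] at h
  have hexpβ : Complex.exp ((Complex.arg β : ℂ) * Complex.I) = β := by
    have h := Complex.norm_mul_exp_arg_mul_I β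
    rwa [hβabs, Complex.ofReal_one, one_mul] at h
  have hexp2 : Complex.exp ((φ:ℂ) * Complex.I)
      = Complex.exp ((((n : ℝ) * Complex.arg β + Real.pi : ℝ) : ℂ) * Complex.I) := by
    rw [hexp1]
    push_cast
    rw [add_mul, Complex.exp_add, Complex.exp_pi_mul_I, mul_assoc, Complex.exp_nat_mul, hexpβ]
    ring
  obtain ⟨k, hk⟩ := Complex.exp_eq_exp_iff_exists_int.mp hexp2
  have hk' : φ = (n:ℝ) * Complex.arg β + Real.pi + (k:ℝ) * (2 * Real.pi) := by
    have h := congrArg Complex.im hk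
    simpa [Complex.add_im, Complex.mul_im, Complex.mul_re, Complex.I_im, Complex.I_re,
      Complex.ofReal_re, Complex.ofReal_im] using h
  have harg : |Complex.arg β| ≤ Real.pi := Complex.abs_arg_le_pi β
  have e : ((2*k+1 : ℤ):ℝ) * Real.pi = φ - (n:ℝ) * Complex.arg β := by push_cast; linarith
  refine ⟨2 * k + 1, ⟨k, by ring⟩, ?_, ?_, hφB⟩
  · -- |2k+1| ≤ n
    have hlt : |((2*k+1:ℤ):ℝ)| * Real.pi < ((n:ℝ)+1) * Real.pi := by
      rw [← abs_of_pos Real.pi_pos, ← abs_mul, abs_of_pos Real.pi_pos, e]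
      calc |φ - (n:ℝ) * Complex.arg β| ≤ |φ| + |(n:ℝ) * Complex.arg β| := abs_sub _ _
        _ = |φ| + (n:ℝ) * |Complex.arg β| := by rw [abs_mul, Nat.abs_cast]
        _ < Real.pi + (n:ℝ) * Real.pi :=
            add_lt_add_of_lt_of_le hφltpi (mul_le_mul_of_nonneg_left harg n.cast_nonneg)
        _ = ((n:ℝ)+1) * Real.pi := by ring
    have h2 : |((2*k+1:ℤ):ℝ)| < (n:ℝ) + 1 := (mul_lt_mul_iff_of_pos_right Real.pi_pos).mp hlt
    have h3 : |(2*k+1:ℤ)| < (n:ℤ) + 1 := by exact_mod_cast h2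
    omega
  · -- the abs equality
    have e2 : ((2*k+1 : ℤ):ℝ) * Real.pi + (n:ℝ) * Complex.arg β = φ := by linarith [e]
    rw [show ((2*k+1 : ℤ):ℝ) = ((2*k+1 : ℤ):ℝ) from rfl]
    push_cast
    push_cast at e2
    rw [e2]
end

section
/- Let q, a₁ be integers with q ≥ 2 and a₁² ≤ 4q such that the pair (q, a₁) is ordinary (i.e., β is not a root of unity) and q is not a perfect square. Then the polynomial X⁴ + (2 − a₁²/q)·X² + 1 ∈ ℚ[X] is irreducible over ℚ and has β as a root; that is, it is the minimal polynomial of β over ℚ, and in particular [ℚ(β) : ℚ] = 4. -/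
open Polynomial IntermediateField

/-- An integer which is the square of a rational is a square. -/
lemma isSquare_of_rat_sq (q : ℤ) (r : ℚ) (h : (q : ℚ) = r ^ 2) : IsSquare q := by
  have hden : (r ^ 2).den = 1 := by rw [← h]; exact Rat.den_intCast q
  rw [Rat.den_pow] at hden
  have hd1 : r.den = 1 := by nlinarith [r.den_pos]
  have hr : (r.num : ℚ) = r := by
    conv_rhs => rw [← Rat.num_div_den r, hd1]
    push_cast; ring
  have : (q : ℚ) = ((r.num ^ 2 : ℤ) : ℚ) := by push_cast; rw [hr]; exact h
  have hq : q = r.num ^ 2 := by exact_mod_cast this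
  exact ⟨r.num, by rw [hq]; ring⟩

/-- For an ordinary pair `(q, a₁)` with `q` not a perfect square, the
polynomial `X⁴ + (2 − a₁²/q)·X² + 1 ∈ ℚ[X]` is irreducible, has `β` as a root, is the minimal
polynomial of `β` over `ℚ`, and `[ℚ(β) : ℚ] = 4`. -/
theorem minpoly_beta (q a1 : ℤ) (hq : 2 ≤ q) (ha1 : a1 ^ 2 ≤ 4 * q)
    (α β : ℂ) (hα : α ^ 2 - a1 * α + q = 0) (him : 0 ≤ α.im)
    (hβ : β = α / (Real.sqrt q : ℂ))
    (hord : ¬ ∃ k : ℕ, 0 < k ∧ β ^ k = 1)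
    (hns : ¬ IsSquare q) :
    Irreducible (X ^ 4 + C (2 - (a1 : ℚ) ^ 2 / (q : ℚ)) * X ^ 2 + 1) ∧
    Polynomial.aeval β (X ^ 4 + C (2 - (a1 : ℚ) ^ 2 / (q : ℚ)) * X ^ 2 + 1) = 0 ∧
    minpoly ℚ β = X ^ 4 + C (2 - (a1 : ℚ) ^ 2 / (q : ℚ)) * X ^ 2 + 1 ∧
    Module.finrank ℚ ℚ⟮β⟯ = 4 := by
  -- basic positivity
  have hq0 : (0:ℝ) < (q:ℝ) := by exact_mod_cast lt_of_lt_of_le (by norm_num) hq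
  have hsq : Real.sqrt q > 0 := Real.sqrt_pos.2 hq0
  have hsq2 : (Real.sqrt q : ℝ) ^ 2 = (q : ℝ) := Real.sq_sqrt hq0.le
  have hsqC : ((Real.sqrt q : ℝ) : ℂ) ^ 2 = (q : ℂ) := by
    rw [← Complex.ofReal_pow, hsq2]; norm_num
  have hqC : (q : ℂ) ≠ 0 := by exact_mod_cast hq0.ne'
  have hsqC0 : ((Real.sqrt q : ℝ) : ℂ) ≠ 0 := by exact_mod_cast hsq.ne'
  -- a1 ≠ 0
  have ha1ne : a1 ≠ 0 := by
    intro h0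
    subst h0
    apply hord
    refine ⟨4, by norm_num, ?_⟩
    have hβ2 : β ^ 2 = -1 := by
      rw [hβ]
      rw [div_pow, hsqC]
      have : α ^ 2 = -(q:ℂ) := by linear_combination hα
      rw [this]
      field_simp
    calc β ^ 4 = (β ^ 2) ^ 2 := by ring
    _ = 1 := by rw [hβ2]; norm_num
  -- strict inequality a1^2 < 4q
  have hlt : a1 ^ 2 < 4 * q := by
    rcases lt_or_eq_of_le ha1 with h | h
    · exact h
    · exfalso
      have heven : Even a1 := by
        have : Even (a1 ^ 2) := ⟨2 * q, by linarith⟩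
        exact (Int.even_pow.mp this).1
      obtain ⟨k, hk⟩ := heven
      apply hns
      refine ⟨k, ?_⟩
      have h4 : 4 * q = 4 * (k * k) := by rw [← h, hk]; ring
      linarith
  -- α.im > 0
  have himpos : 0 < α.im := by
    rcases lt_or_eq_of_le him with h | h
    · exact h
    · exfalso
      have hre : α = (α.re : ℂ) := by
        apply Complex.ext <;> simp [← h]
      set x := α.re with hx
      rw [hre] at hα
      have hℝ : x ^ 2 - (a1:ℝ) * x + (q:ℝ) = 0 := by exact_mod_cast hα
      have : ((a1:ℝ))^2 < 4 * q := by exact_mod_cast hlt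
      nlinarith [sq_nonneg (2*x - a1)]
  have hαne : α ≠ 0 := by
    intro h; rw [h] at hα; simp at hα
    exact hqC (by exact_mod_cast hα)
  -- conj α
  have hconj : (starRingEnd ℂ) α = (a1 : ℂ) - α := by
    have hα' : ((starRingEnd ℂ) α) ^ 2 - (a1:ℂ) * ((starRingEnd ℂ) α) + (q:ℂ) = 0 := by
      have := congrArg (starRingEnd ℂ) hα
      push_cast at this ⊢
      simpa [map_add, map_sub, map_mul, map_pow] using this
    have hne : (starRingEnd ℂ) α ≠ α := by
      intro h
      have := Complex.conj_eq_iff_im.mp h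
      linarith
    have hfac : ((starRingEnd ℂ) α - α) * ((starRingEnd ℂ) α + α - a1) = 0 := by
      linear_combination hα' - hα
    rcases mul_eq_zero.mp hfac with h | h
    · exact absurd (sub_eq_zero.mp h) hne
    · linear_combination h
  have hnorm : α * (starRingEnd ℂ) α = (q : ℂ) := by
    rw [hconj]; linear_combination -hα
  -- β basic facts
  have hβne : β ≠ 0 := by
    rw [hβ]; exact div_ne_zero hαne hsqC0
  have hβim : β.im ≠ 0 := by
    rw [hβ]
    rw [Complex.div_ofReal_im]
    positivity
  have hsqmul : ((Real.sqrt q : ℝ) : ℂ) * ((Real.sqrt q : ℝ) : ℂ) = (q : ℂ) := by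
    rw [← sq]; exact hsqC
  have hββ : β * (starRingEnd ℂ) β = 1 := by
    rw [hβ, map_div₀, Complex.conj_ofReal, div_mul_div_comm, hnorm, hsqmul, div_self hqC]
  have hβconj : (starRingEnd ℂ) β = β⁻¹ := eq_inv_of_mul_eq_one_left (by rw [mul_comm]; exact hββ)
  -- β satisfies quadratic over ℝ(√q): β² - (a1/√q) β + 1 = 0
  have hquad : β ^ 2 - ((a1 / Real.sqrt q : ℝ) : ℂ) * β + 1 = 0 := by
    have h1 : β + (starRingEnd ℂ) β = ((a1 / Real.sqrt q : ℝ) : ℂ) := by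
      rw [hβ, map_div₀, Complex.conj_ofReal, hconj]
      push_cast
      field_simp
      ring
    linear_combination β * h1 - hββ
  -- the quartic polynomial
  set c : ℚ := 2 - (a1 : ℚ) ^ 2 / (q : ℚ) with hc
  set p : ℚ[X] := X ^ 4 + C c * X ^ 2 + 1 with hp
  have hqQ : ((q:ℚ)) ≠ 0 := by
    have : (0:ℚ) < (q:ℚ) := by exact_mod_cast lt_of_lt_of_le (by norm_num) hq
    exact this.ne'
  have hmonic : p.Monic := by
    have : p.natDegree = 4 ∧ p.Monic := by
      constructor
      · unfold p; compute_degree!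
      · unfold p; monicity!
    exact this.2
  have hdeg : p.natDegree = 4 := by unfold p; compute_degree!
  have hpne : p ≠ 0 := hmonic.ne_zero
  -- β is a root of p
  have hg2 : ((a1 / Real.sqrt q : ℝ) : ℂ) ^ 2 = (a1:ℂ)^2 / (q:ℂ) := by
    rw [Complex.ofReal_div, div_pow, hsqC]
    push_cast; ring
  have heq : β ^ 4 + (2 - (a1:ℂ)^2/(q:ℂ)) * β ^ 2 + 1 = 0 := by
    linear_combination (β^2 + ((a1 / Real.sqrt q : ℝ) : ℂ)*β + 1) * hquad + β^2 * hg2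
  have haev : Polynomial.aeval β p = 0 := by
    rw [hp]
    simp only [map_add, map_mul, map_pow, aeval_X, aeval_C, map_one, eq_ratCast]
    have hcast : ((c : ℚ) : ℂ) = 2 - (a1:ℂ)^2/(q:ℂ) := by
      rw [hc]; push_cast; ring
    rw [hcast]
    exact heq
  have hint : IsIntegral ℚ β := ⟨p, hmonic, haev⟩
  -- no rational roots of p
  have hcgt : (-2 : ℚ) < c := by
    have hltQ : ((a1:ℚ))^2 < 4*(q:ℚ) := by exact_mod_cast hlt
    have hqpos : (0:ℚ) < (q:ℚ) := by exact_mod_cast lt_of_lt_of_le (by norm_num) hq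
    have h4 : (a1:ℚ)^2/(q:ℚ) < 4 := by rw [div_lt_iff₀ hqpos]; linarith
    rw [hc]
    linarith
  have hnoroot : ∀ u : ℚ, p.eval u ≠ 0 := by
    intro u
    have : p.eval u = u^4 + c*u^2 + 1 := by rw [hp]; simp
    rw [this]
    have hcu : (0:ℚ) ≤ (c + 2) * u^2 := mul_nonneg (by linarith) (sq_nonneg u)
    nlinarith [sq_nonneg (u^2 - 1)]
  -- minpoly divides p
  set m : ℚ[X] := minpoly ℚ β with hm
  have hdvd : m ∣ p := minpoly.dvd ℚ β haev
  have hmmonic : m.Monic := minpoly.monic hint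
  have hmne : m ≠ 0 := hmmonic.ne_zero
  have hmle : m.natDegree ≤ 4 := hdeg ▸ Polynomial.natDegree_le_of_dvd hdvd hpne
  have hmpos : 0 < m.natDegree := minpoly.natDegree_pos hint
  -- degree ≠ 1
  have hne1 : m.natDegree ≠ 1 := by
    intro h1
    have hmx : m = X + C (m.coeff 0) := hmmonic.eq_X_add_C h1
    have h0 : Polynomial.aeval β m = 0 := minpoly.aeval ℚ β
    rw [hmx] at h0
    simp only [map_add, aeval_X, aeval_C, eq_ratCast] at h0
    have hβr : β = -((m.coeff 0 : ℚ) : ℂ) := by linear_combination h0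
    apply hβim
    rw [hβr]
    simp
  -- degree ≠ 2
  have hne2 : m.natDegree ≠ 2 := by
    intro h2
    have h0 : Polynomial.aeval β m = 0 := minpoly.aeval ℚ β
    rw [Polynomial.aeval_eq_sum_range (x := β), h2] at h0
    have hlead : m.coeff 2 = 1 := by
      have := hmmonic.coeff_natDegree
      rwa [h2] at this
    rw [Finset.sum_range_succ, Finset.sum_range_succ, Finset.sum_range_one, hlead] at h0
    set s : ℚ := m.coeff 1 with hs
    set t : ℚ := m.coeff 0 with ht
    -- h0 : t • β^0 + s • β^1 + 1 • β^2 = 0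
    have h0' : β^2 + (s:ℂ)*β + (t:ℂ) = 0 := by
      simp only [pow_zero, pow_one, Rat.smul_def, Rat.cast_one, one_mul, mul_one] at h0
      linear_combination h0
    -- subtract hquad
    have h3 : ((((s:ℝ) + a1 / Real.sqrt q : ℝ)) : ℂ) * β + (((t:ℝ) - 1 : ℝ) : ℂ) = 0 := by
      rw [Complex.ofReal_add, Complex.ofReal_sub, Complex.ofReal_one,
        Complex.ofReal_ratCast, Complex.ofReal_ratCast]
      linear_combination h0' - hquad
    have him0 : ((s:ℝ) + a1 / Real.sqrt q) * β.im = 0 := by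
      have := congrArg Complex.im h3
      simpa [Complex.add_im, Complex.im_ofReal_mul] using this
    have hw : (s:ℝ) + a1 / Real.sqrt q = 0 := by
      rcases mul_eq_zero.mp him0 with h | h
      · exact h
      · exact absurd h hβim
    -- hence a1/√q = -s, so a1² = s² q
    have ha2 : (a1:ℝ)^2 = (q:ℝ) * (s:ℝ)^2 := by
      have : (a1:ℝ) = -(s:ℝ) * Real.sqrt q := by
        field_simp at hw
        linarith
      rw [this, mul_pow, Real.sq_sqrt hq0.le]; ring
    have ha2Q : (a1:ℚ)^2 = (q:ℚ) * s^2 := by exact_mod_cast ha2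
    have hsne : s ≠ 0 := by
      intro h
      rw [h] at ha2Q
      simp at ha2Q
      exact ha1ne (by exact_mod_cast ha2Q)
    apply hns
    apply isSquare_of_rat_sq q ((a1:ℚ)/s)
    rw [div_pow]
    rw [eq_div_iff (by positivity)]
    linear_combination -ha2Q
  -- degree ≠ 3
  have hne3 : m.natDegree ≠ 3 := by
    intro h3
    obtain ⟨l, hl⟩ := hdvd
    have hlne : l ≠ 0 := by
      intro h; rw [h, mul_zero] at hl; exact hpne hl
    have hldeg : l.natDegree = 1 := by
      have := Polynomial.natDegree_mul hmne hlne
      rw [← hl, hdeg, h3] at this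
      omega
    have hlmonic : l.Monic := hmmonic.of_mul_monic_left (hl ▸ hmonic)
    have hlx : l = X + C (l.coeff 0) := hlmonic.eq_X_add_C hldeg
    apply hnoroot (-(l.coeff 0))
    rw [hl, Polynomial.eval_mul, hlx]
    simp
  have hmdeg : m.natDegree = 4 := by omega
  -- m = p
  have hmp : m = p := by
    obtain ⟨l, hl⟩ := hdvd
    have hlne : l ≠ 0 := by
      intro h; rw [h, mul_zero] at hl; exact hpne hl
    have hldeg : l.natDegree = 0 := by
      have := Polynomial.natDegree_mul hmne hlne
      rw [← hl, hdeg, hmdeg] at this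
      omega
    have hlmonic : l.Monic := hmmonic.of_mul_monic_left (hl ▸ hmonic)
    have : l = 1 := hlmonic.natDegree_eq_zero.mp hldeg
    rw [hl, this, mul_one]
  refine ⟨?_, haev, hmp.symm ▸ rfl, ?_⟩
  · rw [← hmp]
    exact minpoly.irreducible hint
  · rw [IntermediateField.adjoin.finrank hint, ← hm, hmdeg]
end

section
/- Let q, a₁ be integers with q ≥ 2 and a₁² ≤ 4q, and let n be a positive integer with −aₙ = ⌊2·q^{n/2}⌋. Let m be an odd integer with |m| ≤ n such that |m·π + n·arg(β)| < π/3, let d = gcd(m, n), and set ñ = n/d. Then −a_{ñ} = ⌊2·q^{ñ/2}⌋. -/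
set_option maxHeartbeats 1000000

private lemma cos_sub_odd_mul_pi (x : ℝ) (k : ℤ) (hk : Odd k) :
    Real.cos (x - k * Real.pi) = -Real.cos x := by
  obtain ⟨j, rfl⟩ := hk
  have h : x - ((2*j+1 : ℤ) : ℝ) * Real.pi = (x - Real.pi) - j * (2 * Real.pi) := by
    push_cast; ring
  rw [h, Real.cos_sub_int_mul_two_pi, Real.cos_sub_pi]

private lemma one_sub_cos_eq' (x : ℝ) : 1 - Real.cos x = 2 * Real.sin (x/2)^2 := by
  have h1 := Real.cos_two_mul (x/2)
  have h2 := Real.sin_sq_add_cos_sq (x/2)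
  have h3 : (2:ℝ) * (x/2) = x := by ring
  rw [h3] at h1
  nlinarith

/-- If `−aₙ = ⌊2·q^{n/2}⌋` and `m` is an odd integer with `|m| ≤ n` and
`|m·π + n·arg β| < π/3`, then with `d = gcd(m, n)` and `ñ = n/d` one has
`−a_{ñ} = ⌊2·q^{ñ/2}⌋`. -/
theorem maximal_reduce_gcd (q a1 : ℤ) (hq : 2 ≤ q) (ha1 : a1 ^ 2 ≤ 4 * q)
    (α β : ℂ) (hα : α ^ 2 - a1 * α + q = 0) (him : 0 ≤ α.im)
    (hβ : β = α / (Real.sqrt q : ℂ))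
    (a : ℕ → ℤ) (ha : ∀ k : ℕ, (a k : ℂ) = α ^ k + (starRingEnd ℂ) α ^ k)
    (n : ℕ) (hn : 0 < n) (hmax : -(a n) = ⌊2 * Real.sqrt q ^ n⌋)
    (m : ℤ) (hm : Odd m) (hmn : |m| ≤ (n : ℤ))
    (harg : |(m : ℝ) * Real.pi + (n : ℝ) * Complex.arg β| < Real.pi / 3) :
    -(a (n / Int.gcd m n)) = ⌊2 * Real.sqrt q ^ (n / Int.gcd m n)⌋ := by
  have hqR : (2:ℝ) ≤ (q:ℝ) := by exact_mod_cast hq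
  set s := Real.sqrt (q:ℝ) with hs
  have hs1 : 1 ≤ s := by
    rw [hs, show (1:ℝ) = Real.sqrt 1 by simp]
    exact Real.sqrt_le_sqrt (by linarith)
  have hs0 : 0 < s := lt_of_lt_of_le one_pos hs1
  -- |α| = s
  have hnormsq : α.re^2 + α.im^2 = (q:ℝ) := by
    rw [Complex.ext_iff] at hα
    obtain ⟨h1, h2⟩ := hα
    simp [pow_two, Complex.mul_re, Complex.mul_im] at h1 h2
    have ha1R : (a1:ℝ)^2 ≤ 4*(q:ℝ) := by exact_mod_cast ha1
    rcases mul_eq_zero.mp (show (2*α.re - (a1:ℝ)) * α.im = 0 by linear_combination h2) with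
      h | h
    · linear_combination -h1 + α.re*h
    · have h4 : 2*α.re - (a1:ℝ) = 0 := by
        nlinarith [sq_nonneg (2*α.re - (a1:ℝ)), h1, h]
      linear_combination -h1 + α.re*h4
  have habs : ‖α‖ = s := by
    rw [Complex.norm_def, Complex.normSq_apply, hs]
    congr 1
    nlinarith [hnormsq]
  set θ := Complex.arg α with hθ
  -- a k formula
  have haR : ∀ k : ℕ, (a k : ℝ) = 2 * s^k * Real.cos (k * θ) := by
    intro k
    have hαe : α = (s:ℂ) * Complex.exp (θ * Complex.I) := by
      rw [← habs, Complex.norm_mul_exp_arg_mul_I]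
    have hp : α ^ k = ((s^k : ℝ) : ℂ) * Complex.exp (((k:ℝ)*θ : ℝ) * Complex.I) := by
      rw [hαe, mul_pow, ← Complex.exp_nat_mul]
      push_cast
      ring_nf
    have h2 : ((a k : ℤ) : ℂ) = ((2 * (α^k).re : ℝ) : ℂ) := by
      rw [ha k, ← map_pow, Complex.add_conj]
    have h3 : ((a k : ℤ) : ℝ) = 2 * (α^k).re := by exact_mod_cast h2
    rw [h3, hp, Complex.re_ofReal_mul, Complex.exp_ofReal_mul_I_re]
    ring
  -- arg β = θ
  have hargβ : Complex.arg β = θ := by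
    have hβ' : β = ((s⁻¹ : ℝ) : ℂ) * α := by
      rw [hβ, hs]; push_cast; ring
    rw [hβ', Complex.arg_real_mul α (by positivity)]
  rw [hargβ] at harg
  -- gcd setup
  set D := Int.gcd m n with hD
  have hDm : (D:ℤ) ∣ m := Int.gcd_dvd_left m n
  have hDnn : D ∣ n := by
    have : (D:ℤ) ∣ (n:ℤ) := Int.gcd_dvd_right m n
    exact_mod_cast this
  have hD0 : 0 < D := by
    rcases Nat.eq_zero_or_pos D with h | h
    · exfalso
      have := Int.gcd_eq_zero_iff.mp h
      omega
    · exact h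
  by_cases hD1 : D = 1
  · simpa [hD1] using hmax
  have hD2 : 2 ≤ D := by omega
  set nt := n / D with hntdef
  have hnd : n = nt * D := (Nat.div_mul_cancel hDnn).symm
  have hnt0 : 0 < nt := Nat.div_pos (Nat.le_of_dvd hn hDnn) hD0
  have hntn : nt ≤ n := Nat.div_le_self _ _
  clear_value s θ D nt
  obtain ⟨m', hm'⟩ := hDm
  have hm'odd : Odd m' := by
    rcases Int.even_or_odd m' with h | h
    · exfalso
      rw [← Int.not_odd_iff_even] at h
      exact absurd (hm' ▸ hm) (by
        simp only [Int.odd_mul, not_and_or]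
        right; exact h)
    · exact h
  -- angle algebra
  set φ := (m:ℝ) * Real.pi + (n:ℝ) * θ with hφdef
  clear_value φ
  have hnθ : (n:ℝ) * θ = φ - m * Real.pi := by rw [hφdef]; ring
  have hnR : (n:ℝ) = (nt:ℝ) * (D:ℝ) := by exact_mod_cast hnd
  have hmR : (m:ℝ) = (D:ℝ) * (m':ℝ) := by exact_mod_cast hm'
  have hDR : ((D:ℕ):ℝ) ≠ 0 := by positivity
  have hntθ : (nt:ℝ) * θ = φ / (D:ℝ) - m' * Real.pi := by
    rw [eq_sub_iff_add_eq, eq_div_iff hDR]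
    linear_combination hnθ - θ*hnR - Real.pi*hmR
  have hcosn : Real.cos ((n:ℝ)*θ) = -Real.cos φ := by
    rw [hnθ, cos_sub_odd_mul_pi φ m hm]
  have hcosnt : Real.cos ((nt:ℝ)*θ) = -Real.cos (φ/(D:ℝ)) := by
    rw [hntθ, cos_sub_odd_mul_pi _ m' hm'odd]
  -- from maximality: (1 - cos φ) * (2 s^n) < 1
  have hsn0 : (0:ℝ) < s^n := by positivity
  have hsnt0 : (0:ℝ) < s^nt := by positivity
  have h1 : (a n : ℝ) < 1 - 2*s^n := by
    have h := Int.sub_one_lt_floor (2*s^n)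
    rw [← hmax] at h
    push_cast at h
    linarith
  have hA : (1 - Real.cos φ) * (2*s^n) < 1 := by
    have h2 := haR n
    rw [hcosn] at h2
    nlinarith [h1, h2]
  -- φ² bound : φ^2 * (4 s^n) < π^2
  have hπ := Real.pi_pos
  have hφlt : |φ| < Real.pi / 3 := harg
  have hB : φ^2 * 2 ≤ (1 - Real.cos φ) * Real.pi^2 := by
    have e1 := one_sub_cos_eq' φ
    have e2 : 2/Real.pi * (|φ|/2) ≤ Real.sin (|φ|/2) :=
      Real.mul_le_sin (by positivity) (by
        have := abs_nonneg φ
        linarith)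
    have e3 : Real.sin (|φ|/2)^2 = Real.sin (φ/2)^2 := by
      rcases le_or_gt 0 φ with h | h
      · rw [abs_of_nonneg h]
      · rw [abs_of_neg h, show -φ/2 = -(φ/2) by ring, Real.sin_neg]
        ring
    have e4 : (2/Real.pi * (|φ|/2))^2 ≤ Real.sin (|φ|/2)^2 := by
      apply pow_le_pow_left₀ (by positivity) e2
    rw [e3] at e4
    have e5 : (2/Real.pi * (|φ|/2))^2 = φ^2 / Real.pi^2 := by
      rw [mul_pow, div_pow, div_pow, sq_abs]
      field_simp
    rw [e5] at e4
    rw [e1]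
    rw [div_le_iff₀ (by positivity)] at e4
    linarith [e4]
  have hC : φ^2 * (4*s^n) < Real.pi^2 := by
    have hint1 := mul_lt_mul_of_pos_left hA (show (0:ℝ) < Real.pi^2 by positivity)
    have hint2 := mul_le_mul_of_nonneg_right hB (le_of_lt (by positivity : (0:ℝ) < 2*s^n))
    ring_nf at hint1 hint2 ⊢
    linarith [hint1, hint2]
  -- goal-side bound
  have hD2R : (2:ℝ) ≤ (D:ℝ) := by exact_mod_cast hD2
  have hsnn : s^nt ≤ s^n := pow_le_pow_right₀ hs1 hntn
  have hF1 : 1 - Real.cos (φ/(D:ℝ)) ≤ (φ/(D:ℝ))^2 / 2 := by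
    have := Real.one_sub_sq_div_two_le_cos (x := φ/(D:ℝ))
    linarith
  have hx2 : (φ/(D:ℝ))^2 * (D:ℝ)^2 = φ^2 := by
    field_simp
  have hG : (1 - Real.cos (φ/(D:ℝ))) * (2*s^nt) < 1 := by
    have s1 : (1 - Real.cos (φ/(D:ℝ))) * (2*s^nt) ≤ (φ/(D:ℝ))^2/2 * (2*s^nt) :=
      mul_le_mul_of_nonneg_right hF1 (by positivity)
    have s2 : (φ/(D:ℝ))^2/2 * (2*s^nt) = φ^2 * s^nt / (D:ℝ)^2 := by
      field_simp
    have s3 : φ^2 * s^nt / (D:ℝ)^2 ≤ φ^2 * s^n / 4 :=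
      div_le_div₀ (by positivity) (mul_le_mul_of_nonneg_left hsnn (sq_nonneg φ))
        (by norm_num) (by nlinarith [hD2R])
    have s4 : φ^2 * s^n / 4 < Real.pi^2 / 16 := by linarith [hC]
    have s5 : Real.pi^2 / 16 < 1 := by nlinarith [Real.pi_lt_d2, hπ]
    linarith [s1, s2 ▸ s1, s3, s4, s5]
  -- conclude
  have hup : (a nt : ℝ) < 1 - 2*s^nt := by
    have h2 := haR nt
    rw [hcosnt] at h2
    nlinarith [hG, h2]
  have hlow : -(2*s^nt) ≤ (a nt : ℝ) := by
    have h2 := haR nt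
    nlinarith [Real.neg_one_le_cos ((nt:ℝ)*θ), hsnt0]
  have hle : -(a nt) ≤ ⌊2*s^nt⌋ := by
    apply Int.le_floor.2
    push_cast
    linarith
  have hge : ⌊2*s^nt⌋ ≤ -(a nt) := by
    have hf := Int.floor_le (2*s^nt)
    have h7 : ((⌊2*s^nt⌋ : ℤ) : ℝ) < ((-(a nt) + 1 : ℤ) : ℝ) := by push_cast; linarith
    have h8 : ⌊2*s^nt⌋ < -(a nt) + 1 := by exact_mod_cast h7
    omega
  omega
end

section
/- Let q, a₁ be integers with q ≥ 3 and a₁² ≤ 4q. If −a₃ = ⌊2·q^{3/2}⌋, i.e., 0 ≤ a₁³ − 3q·a₁ + 2·q^{3/2} < 1, then a₁ = −⌊2·√q⌋ or a₁ is the integer nearest to √q (i.e., a₁ = ⌊√q + 1/2⌋). -/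
/-- If `q ≥ 3`, `a₁² ≤ 4q` and `0 ≤ a₁³ − 3q·a₁ + 2·q^{3/2} < 1`, then
`a₁ = −⌊2√q⌋` or `a₁ = ⌊√q + 1/2⌋` (the integer nearest to `√q`). -/
theorem maximal_cubic_trace (q a1 : ℤ) (hq : 3 ≤ q) (ha1 : a1 ^ 2 ≤ 4 * q)
    (h0 : 0 ≤ (a1 : ℝ) ^ 3 - 3 * q * a1 + 2 * Real.sqrt q ^ 3)
    (h1 : (a1 : ℝ) ^ 3 - 3 * q * a1 + 2 * Real.sqrt q ^ 3 < 1) :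
    a1 = -⌊2 * Real.sqrt q⌋ ∨ a1 = ⌊Real.sqrt q + 1 / 2⌋ := by
  set s := Real.sqrt q with hsdef
  have hq0 : (0:ℝ) ≤ (q:ℝ) := by exact_mod_cast (by linarith : (0:ℤ) ≤ q)
  have hs2 : s ^ 2 = (q:ℝ) := Real.sq_sqrt hq0
  have hs0 : 0 ≤ s := Real.sqrt_nonneg _
  have hs3 : (3:ℝ) ≤ s ^ 2 := by rw [hs2]; exact_mod_cast hq
  have hs1 : (1.7:ℝ) ≤ s := by nlinarith
  have hb : (a1:ℝ) ^ 2 ≤ 4 * s ^ 2 := by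
    rw [hs2]; exact_mod_cast ha1
  have key : ((a1:ℝ) - s) ^ 2 * ((a1:ℝ) + 2 * s) =
      (a1 : ℝ) ^ 3 - 3 * q * a1 + 2 * s ^ 3 := by
    rw [← hs2]; ring
  rcases le_or_gt a1 0 with hneg | hpos
  · left
    have hnegR : (a1:ℝ) ≤ 0 := by exact_mod_cast hneg
    have hA1 : (3:ℝ) ≤ ((a1:ℝ) - s) ^ 2 := by nlinarith
    have hsum : 0 ≤ (a1:ℝ) + 2 * s := by nlinarith
    have hsmall : (a1:ℝ) + 2 * s < 1/3 := by
      nlinarith [mul_nonneg (by linarith : (0:ℝ) ≤ ((a1:ℝ) - s) ^ 2 - 3) hsum]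
    have hfl : ⌊2 * s⌋ = -a1 := by
      rw [Int.floor_eq_iff]
      constructor
      · push_cast; linarith
      · push_cast; linarith
    omega
  · right
    have hposR : (1:ℝ) ≤ (a1:ℝ) := by exact_mod_cast hpos
    have hlow : s - 1/2 < (a1:ℝ) := by
      by_contra h
      push_neg at h
      nlinarith [sq_nonneg ((a1:ℝ) - s), sq_nonneg ((a1:ℝ) - s + 1/2)]
    have hhigh : (a1:ℝ) < s + 1/2 := by
      by_contra h
      push_neg at h
      nlinarith [sq_nonneg ((a1:ℝ) - s), sq_nonneg ((a1:ℝ) - s - 1/2)]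
    have hfl : ⌊s + 1/2⌋ = a1 := by
      rw [Int.floor_eq_iff]
      constructor
      · push_cast; linarith
      · push_cast; linarith
    omega
end

section
/- Let q be an integer with q ≥ 2 and set a₁ = −⌊2·√q⌋. If −a₃ = ⌊2·q^{3/2}⌋, i.e., 0 ≤ a₁³ − 3q·a₁ + 2·q^{3/2} < 1, then q is a perfect square. -/
/-- If `q ≥ 2`, `a₁ = −⌊2√q⌋` and `0 ≤ a₁³ − 3q·a₁ + 2·q^{3/2} < 1`, then
`q` is a perfect square. -/
theorem maximal_cubic_neg_trace_square (q a1 : ℤ) (hq : 2 ≤ q)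
    (ha1 : a1 = -⌊2 * Real.sqrt q⌋)
    (h0 : 0 ≤ (a1 : ℝ) ^ 3 - 3 * q * a1 + 2 * Real.sqrt q ^ 3)
    (h1 : (a1 : ℝ) ^ 3 - 3 * q * a1 + 2 * Real.sqrt q ^ 3 < 1) :
    IsSquare q := by
  set s := Real.sqrt (q : ℝ) with hsdef
  have hq0 : (0:ℝ) ≤ (q:ℝ) := by exact_mod_cast (by linarith : (0:ℤ) ≤ q)
  have hsq : s ^ 2 = (q:ℝ) := Real.sq_sqrt hq0
  have hs0 : 0 ≤ s := Real.sqrt_nonneg _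
  set m : ℤ := ⌊2 * s⌋ with hmdef
  have hfl : (m : ℝ) ≤ 2 * s := Int.floor_le _
  have hfl2 : 2 * s < (m : ℝ) + 1 := Int.lt_floor_add_one _
  have hq2 : (2:ℝ) ≤ (q:ℝ) := by exact_mod_cast hq
  have hs1 : 1 < s := by nlinarith
  subst ha1
  push_cast at h0 h1
  by_cases hc : m ^ 2 = 4 * q
  · obtain ⟨k, hk⟩ : Even m := by
      have h2 : Even (m ^ 2) := ⟨2 * q, by linarith⟩
      exact (Int.even_pow.mp h2).1
    rw [hk] at hc
    exact ⟨k, by nlinarith⟩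
  · exfalso
    have hm0 : (0:ℝ) ≤ (m:ℝ) := by
      have : (0:ℤ) ≤ m := by
        rw [hmdef]; exact Int.floor_nonneg.mpr (by linarith)
      exact_mod_cast this
    have hmle : m ^ 2 ≤ 4 * q := by
      have : (m:ℝ) ^ 2 ≤ 4 * (q:ℝ) := by nlinarith
      exact_mod_cast this
    have hlt : m ^ 2 + 1 ≤ 4 * q := lt_of_le_of_ne hmle hc
    have hlt' : (m:ℝ) ^ 2 + 1 ≤ 4 * (q:ℝ) := by exact_mod_cast hlt
    -- key: (2s - m)(2s + m) = 4q - m² ≥ 1, so 2s - m ≥ 1/(4s)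
    have hkey : 1 ≤ (2 * s - m) * (2 * s + m) := by nlinarith
    nlinarith [sq_nonneg (3 * s - (2 * s - m)), sq_nonneg (2 * s - m),
      mul_nonneg (sub_nonneg.mpr hfl) hs0, sq_nonneg (s - 1), sq_nonneg (3 * s - 1),
      mul_nonneg (mul_nonneg (sub_nonneg.mpr hfl) (sub_nonneg.mpr hfl)) hs0]
end

section
/- Let a₁, b be integers with a₁ ≥ 2 and b² ≤ a₁, and set q = a₁² + b. Then −a₃ = ⌊2·q^{3/2}⌋, i.e., 0 ≤ a₁³ − 3q·a₁ + 2·q^{3/2} < 1. -/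
/-- **Soomro.** If `a₁ ≥ 2`, `b² ≤ a₁` and `q = a₁² + b`, then
`0 ≤ a₁³ − 3q·a₁ + 2·q^{3/2} < 1`, i.e. `−a₃ = ⌊2·q^{3/2}⌋`. -/
theorem soomro_cubic (a1 b q : ℤ) (ha1 : 2 ≤ a1) (hb : b ^ 2 ≤ a1) (hq : q = a1 ^ 2 + b) :
    0 ≤ (a1 : ℝ) ^ 3 - 3 * q * a1 + 2 * Real.sqrt q ^ 3 ∧
      (a1 : ℝ) ^ 3 - 3 * q * a1 + 2 * Real.sqrt q ^ 3 < 1 := by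
  have hbl : -a1 ≤ b := by nlinarith [sq_nonneg (b + 1)]
  have hbu : b ≤ a1 := by nlinarith [sq_nonneg (b - 1)]
  have hq0 : (0:ℤ) ≤ q := by nlinarith
  have hN0 : (0:ℤ) ≤ 3 * q * a1 - a1 ^ 3 := by nlinarith
  have h1 : (3 * q * a1 - a1 ^ 3) ^ 2 ≤ 4 * q ^ 3 := by
    subst hq; nlinarith [sq_nonneg b, sq_nonneg (b * a1), mul_nonneg (sq_nonneg b) (by nlinarith : (0:ℤ) ≤ 3 * a1 ^ 2 + 4 * b)]
  have h2 : 4 * q ^ 3 < (3 * q * a1 - a1 ^ 3 + 1) ^ 2 := by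
    subst hq
    have key : 3 * b ^ 2 * a1 ^ 2 + 4 * b ^ 3 < 4 * a1 ^ 3 + 6 * b * a1 + 1 := by
      nlinarith [sq_nonneg b, sq_nonneg (b * a1), mul_le_mul_of_nonneg_right hb (sq_nonneg a1), mul_le_mul_of_nonneg_left hb (sq_nonneg b), sq_nonneg (a1 - b ^ 2), sq_nonneg (a1 + b)]
    nlinarith
  have hq0' : (0:ℝ) ≤ (q:ℝ) := by exact_mod_cast hq0
  have hs0 : 0 ≤ Real.sqrt q := Real.sqrt_nonneg _
  have hs2 : Real.sqrt q ^ 2 = (q:ℝ) := Real.sq_sqrt hq0'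
  have hN0' : (0:ℝ) ≤ 3 * (q:ℝ) * a1 - a1 ^ 3 := by exact_mod_cast hN0
  have h1' : (3 * (q:ℝ) * a1 - a1 ^ 3) ^ 2 ≤ 4 * (q:ℝ) ^ 3 := by exact_mod_cast h1
  have h2' : 4 * (q:ℝ) ^ 3 < (3 * (q:ℝ) * a1 - a1 ^ 3 + 1) ^ 2 := by exact_mod_cast h2
  have hqs : 0 ≤ (q:ℝ) * Real.sqrt q := mul_nonneg hq0' hs0
  have hsqrt : Real.sqrt (4 * (q:ℝ) ^ 3) = 2 * Real.sqrt q ^ 3 := by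
    rw [show (4 * (q:ℝ) ^ 3) = (2 * Real.sqrt q ^ 3) ^ 2 by
        linear_combination (-(4 * ((q:ℝ) ^ 2 + (q:ℝ) * Real.sqrt q ^ 2 + Real.sqrt q ^ 4))) * hs2,
      Real.sqrt_sq (by positivity)]
  constructor
  · have := (Real.le_sqrt hN0' (mul_nonneg (by norm_num) (pow_nonneg hq0' 3))).mpr h1'
    rw [hsqrt] at this
    linarith
  · have := (Real.sqrt_lt' (by linarith : (0:ℝ) < 3 * (q:ℝ) * a1 - a1 ^ 3 + 1)).mpr h2'
    rw [hsqrt] at this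
    linarith
end

section
/- Let ε be a real number with 0 < ε ≤ 1/3. Then there exists a real number x_ε with −1 ≤ x_ε < −4ε/(1+ε)² such that for every real x > x_ε with x ≠ 0 one has (1 + x)^{3/2} < 1 + (3/2)·x + (3/8)·(1 + ε)·x². -/
/-- For `0 < ε ≤ 1/3` there is `x_ε ∈ [−1, −4ε/(1+ε)²)` such that for all
`x > x_ε` with `x ≠ 0`, `(1 + x)^{3/2} < 1 + (3/2)x + (3/8)(1+ε)x²`. -/
theorem pow_three_halves_bound (ε : ℝ) (hε0 : 0 < ε) (hε : ε ≤ 1 / 3) :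
    ∃ xε : ℝ, -1 ≤ xε ∧ xε < -(4 * ε) / (1 + ε) ^ 2 ∧
      ∀ x : ℝ, xε < x → x ≠ 0 →
        (1 + x) ^ ((3 : ℝ) / 2) < 1 + 3 / 2 * x + 3 / 8 * (1 + ε) * x ^ 2 := by
  set s : ℝ := Real.sqrt (1 - 3 * ε) with hs_def
  have hs0 : 0 ≤ s := Real.sqrt_nonneg _
  have hs2 : s ^ 2 = 1 - 3 * ε := Real.sq_sqrt (by linarith)
  have hs1 : s < 1 - ε := by nlinarith [sq_nonneg (s + 1 - ε)]
  have h2s : 0 < 2 - s := by linarith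
  have hεp : (0:ℝ) < 1 + ε := by linarith
  set t : ℝ := s / (2 - s) with ht_def
  have ht0 : 0 ≤ t := div_nonneg hs0 h2s.le
  refine ⟨t ^ 2 - 1, by nlinarith [sq_nonneg t], ?_, ?_⟩
  · -- t^2 - 1 < -(4ε)/(1+ε)^2
    have htlt : t < (1 - ε) / (1 + ε) := by
      rw [div_lt_div_iff₀ h2s hεp]; nlinarith
    have h1 : t ^ 2 < ((1 - ε) / (1 + ε)) ^ 2 := by
      exact pow_lt_pow_left₀ htlt ht0 two_ne_zero
    have h2 : ((1 - ε) / (1 + ε)) ^ 2 - 1 = -(4 * ε) / (1 + ε) ^ 2 := by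
      field_simp; ring
    linarith [h1, h2.symm.le]
  · intro x hx hx0
    have h1x : (0:ℝ) ≤ 1 + x := by nlinarith [sq_nonneg t]
    set u : ℝ := Real.sqrt (1 + x) with hu_def
    have hu0 : 0 ≤ u := Real.sqrt_nonneg _
    have hu2 : u ^ 2 = 1 + x := Real.sq_sqrt h1x
    have hut : t < u := by
      have h : t ^ 2 < u ^ 2 := by rw [hu2]; linarith
      nlinarith
    have hupos : 0 < u := lt_of_le_of_lt ht0 hut
    have hu1 : u ≠ 1 := by
      intro h; apply hx0; rw [h] at hu2; nlinarith
    have key : (1 + x) ^ ((3 : ℝ) / 2) = u ^ 3 := by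
      have : (1 + x) ^ ((3 : ℝ) / 2) = ((1 + x) ^ ((1 : ℝ) / 2)) ^ (3 : ℕ) := by
        rw [← Real.rpow_natCast ((1 + x) ^ ((1:ℝ)/2)) 3, ← Real.rpow_mul h1x]
        norm_num
      rw [this, ← Real.sqrt_eq_rpow]
    rw [key]
    have hxu : x = u ^ 2 - 1 := by linarith
    rw [hxu]
    have hεs : ε = (1 - s ^ 2) / 3 := by linarith
    have hfac : 8 * (1 + 3 / 2 * (u ^ 2 - 1) + 3 / 8 * (1 + ε) * (u ^ 2 - 1) ^ 2 - u ^ 3)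
        = (u - 1) ^ 2 * (((2 - s) * u - s) * ((2 + s) * u + s)) := by
      rw [hεs]; ring
    have hA : 0 < (2 - s) * u - s := by
      have := (div_lt_iff₀ h2s).mp hut
      nlinarith
    have hB : 0 < (2 + s) * u + s := by nlinarith
    have hC : 0 < (u - 1) ^ 2 := by
      have : u - 1 ≠ 0 := sub_ne_zero.mpr hu1
      positivity
    nlinarith [mul_pos hC (mul_pos hA hB)]
end
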